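/- arXiv:math/0504005 — 12 statements merged into one kernel-verified Lean document; each statement's English description precedes it below -/
import Mathlib

section
/- (Sandwich Lemma) Let φ : ℝⁿ → ℝⁿ be a bijection with φ(0) = 0 satisfying K₁‖x₁ − x₂‖ ≤ ‖φ(x₁) − φ(x₂)‖ ≤ K₂‖x₁ − x₂‖ for all x₁, x₂ (with 0 < K₁ ≤ K₂). Let A ⊆ ℝⁿ with 0 ∈ closure(A), and let d ≥ 1, K > 0. Then ST_d(φ(A); K·K₁/K₂^d) ⊆ φ(ST_d(A;K)) ⊆ ST_d(φ(A); K·K₂/K₁^d), where ST_d(B;C) = {x : dist(x,B) ≤ C‖x‖^d}. -/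
open Filter Metric Topology MeasureTheory

noncomputable section

abbrev E (n : ℕ) := EuclideanSpace ℝ (Fin n)

/-- Direction set of `A` at the origin. -/
def Dir (n : ℕ) (A : Set (E n)) : Set (E n) :=
  {a | ‖a‖ = 1 ∧ ∃ x : ℕ → E n, (∀ i, x i ∈ A \ {0}) ∧
    Tendsto x atTop (nhds (0 : E n)) ∧
    Tendsto (fun i => (‖x i‖)⁻¹ • x i) atTop (nhds a)}

/-- Sea-tangle neighbourhood of degree `d` and width `C`. -/
def STg (n : ℕ) (d C : ℝ) (A : Set (E n)) : Set (E n) :=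
  {x | Metric.infDist x A ≤ C * ‖x‖ ^ d}

/-- Cone over the direction set (real tangent cone). -/
def LD (n : ℕ) (A : Set (E n)) : Set (E n) :=
  {x | ∃ a ∈ Dir n A, ∃ t : ℝ, 0 ≤ t ∧ x = t • a}

/-- Sequence selection property. -/
def SSP (n : ℕ) (S : Set (E n)) : Prop :=
  ∀ a : ℕ → E n, (∀ m, a m ≠ 0) → Tendsto a atTop (nhds (0 : E n)) →
    (∃ L ∈ Dir n S, Tendsto (fun m => (‖a m‖)⁻¹ • a m) atTop (nhds L)) →
    ∀ ε > (0:ℝ), ∃ b : ℕ → E n, (∀ m, b m ∈ S) ∧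
      ∀ᶠ m in atTop, ‖a m - b m‖ ≤ ε * min ‖a m‖ ‖b m‖

/-- ST-equivalence of set-germs at the origin. -/
def STEquiv (n : ℕ) (A B : Set (E n)) : Prop :=
  ∃ d₁ > (1:ℝ), ∃ C₁ > (0:ℝ), ∃ d₂ > (1:ℝ), ∃ C₂ > (0:ℝ), ∃ ε > (0:ℝ),
    B ∩ ball (0 : E n) ε ⊆ STg n d₁ C₁ A ∧ A ∩ ball (0 : E n) ε ⊆ STg n d₂ C₂ B

/-! A map with `K₁ * dist x y ≤ dist (f x) (f y) ≤ K₂ * dist x y` changes the distance to a set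
by a factor in `[K₁, K₂]`, and, fixing the origin, changes `‖x‖` likewise; the two widths are chosen
so that these distortions of `infDist` and of `‖x‖ ^ d` cancel. -/

section InfDist

variable {α β : Type*} [PseudoMetricSpace α] [PseudoMetricSpace β] {f : α → β} {K : ℝ}

theorem mul_infDist_le_infDist_image (hK : 0 ≤ K)
    (hf : ∀ x y, K * dist x y ≤ dist (f x) (f y)) (x : α) (s : Set α) :
    K * infDist x s ≤ infDist (f x) (f '' s) := by
  rcases s.eq_empty_or_nonempty with rfl | hs
  · simp
  rw [le_infDist (hs.image f)]
  rintro _ ⟨y, hy, rfl⟩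
  exact (mul_le_mul_of_nonneg_left (infDist_le_dist_of_mem hy) hK).trans (hf x y)

theorem infDist_image_le_mul_infDist (hK : 0 < K)
    (hf : ∀ x y, dist (f x) (f y) ≤ K * dist x y) (x : α) (s : Set α) :
    infDist (f x) (f '' s) ≤ K * infDist x s := by
  rcases s.eq_empty_or_nonempty with rfl | hs
  · simp
  rw [← div_le_iff₀' hK, le_infDist hs]
  intro y hy
  rw [div_le_iff₀' hK]
  exact (infDist_le_dist_of_mem (Set.mem_image_of_mem f hy)).trans (hf x y)

end InfDist

section SeaTangle

variable {n : ℕ} {f : E n → E n} {K₁ K₂ d K : ℝ}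

theorem STg_image_subset_image_STg (hsurj : Function.Surjective f) (hK₁ : 0 < K₁)
    (hK₂ : 0 < K₂) (hd : 0 ≤ d) (hK : 0 ≤ K)
    (hlower : ∀ x y, K₁ * dist x y ≤ dist (f x) (f y)) (hnorm : ∀ x, ‖f x‖ ≤ K₂ * ‖x‖)
    (A : Set (E n)) :
    STg n d (K * K₁ / K₂ ^ d) (f '' A) ⊆ f '' STg n d K A := by
  intro y hy
  obtain ⟨x, rfl⟩ := hsurj y
  refine ⟨x, ?_, rfl⟩
  have hnorm_pow : ‖f x‖ ^ d ≤ K₂ ^ d * ‖x‖ ^ d := by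
    rw [← Real.mul_rpow hK₂.le (norm_nonneg x)]
    exact Real.rpow_le_rpow (norm_nonneg _) (hnorm x) hd
  have : K₁ * infDist x A ≤ K₁ * (K * ‖x‖ ^ d) :=
    calc K₁ * infDist x A ≤ infDist (f x) (f '' A) :=
          mul_infDist_le_infDist_image hK₁.le hlower x A
      _ ≤ K * K₁ / K₂ ^ d * ‖f x‖ ^ d := hy
      _ ≤ K * K₁ / K₂ ^ d * (K₂ ^ d * ‖x‖ ^ d) := by gcongr
      _ = K₁ * (K * ‖x‖ ^ d) := by field_simp
  exact le_of_mul_le_mul_left this hK₁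

theorem image_STg_subset_STg_image (hK₁ : 0 < K₁) (hK₂ : 0 < K₂) (hd : 0 ≤ d) (hK : 0 ≤ K)
    (hupper : ∀ x y, dist (f x) (f y) ≤ K₂ * dist x y) (hnorm : ∀ x, K₁ * ‖x‖ ≤ ‖f x‖)
    (A : Set (E n)) :
    f '' STg n d K A ⊆ STg n d (K * K₂ / K₁ ^ d) (f '' A) := by
  rintro _ ⟨x, hx, rfl⟩
  have hnorm_pow : K₁ ^ d * ‖x‖ ^ d ≤ ‖f x‖ ^ d := by
    rw [← Real.mul_rpow hK₁.le (norm_nonneg x)]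
    exact Real.rpow_le_rpow (by positivity) (hnorm x) hd
  calc infDist (f x) (f '' A) ≤ K₂ * infDist x A := infDist_image_le_mul_infDist hK₂ hupper x A
    _ ≤ K₂ * (K * ‖x‖ ^ d) := by gcongr; exact hx
    _ = K * K₂ / K₁ ^ d * (K₁ ^ d * ‖x‖ ^ d) := by field_simp
    _ ≤ K * K₂ / K₁ ^ d * ‖f x‖ ^ d := by gcongr

end SeaTangle

theorem stmt2_general (n : ℕ) (φ : E n → E n) (hbij : Function.Bijective φ) (hφ0 : φ 0 = 0)
    (K₁ K₂ : ℝ) (hK₁ : 0 < K₁) (hK : K₁ ≤ K₂)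
    (hlip : ∀ x y : E n, K₁ * ‖x - y‖ ≤ ‖φ x - φ y‖ ∧ ‖φ x - φ y‖ ≤ K₂ * ‖x - y‖)
    (A : Set (E n)) (d K : ℝ) (hd : 1 ≤ d) (hKpos : 0 < K) :
    STg n d (K * K₁ / K₂ ^ d) (φ '' A) ⊆ φ '' (STg n d K A) ∧
    φ '' (STg n d K A) ⊆ STg n d (K * K₂ / K₁ ^ d) (φ '' A) := by
  have hK₂ : 0 < K₂ := hK₁.trans_le hK
  have hd₀ : 0 ≤ d := zero_le_one.trans hd
  have hnorm : ∀ x, K₁ * ‖x‖ ≤ ‖φ x‖ ∧ ‖φ x‖ ≤ K₂ * ‖x‖ := fun x => by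
    simpa [hφ0] using hlip x 0
  simp only [← dist_eq_norm] at hlip
  exact ⟨STg_image_subset_image_STg hbij.surjective hK₁ hK₂ hd₀ hKpos.le
      (fun x y => (hlip x y).1) (fun x => (hnorm x).2) A,
    image_STg_subset_STg_image hK₁ hK₂ hd₀ hKpos.le
      (fun x y => (hlip x y).2) (fun x => (hnorm x).1) A⟩

theorem stmt2 (n : ℕ) (φ : E n → E n) (hbij : Function.Bijective φ) (hφ0 : φ 0 = 0)
    (K₁ K₂ : ℝ) (hK₁ : 0 < K₁) (hK : K₁ ≤ K₂)
    (hlip : ∀ x y : E n, K₁ * ‖x - y‖ ≤ ‖φ x - φ y‖ ∧ ‖φ x - φ y‖ ≤ K₂ * ‖x - y‖)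
    (A : Set (E n)) (h0 : (0 : E n) ∈ closure A) (d K : ℝ) (hd : 1 ≤ d) (hKpos : 0 < K) :
    STg n d (K * K₁ / K₂ ^ d) (φ '' A) ⊆ φ '' (STg n d K A) ∧
    φ '' (STg n d K A) ⊆ STg n d (K * K₂ / K₁ ^ d) (φ '' A) :=
  stmt2_general n φ hbij hφ0 K₁ K₂ hK₁ hK hlip A d K hd hKpos
end
end

section
/- ST-equivalence is an equivalence relation: on the collection of subsets A ⊆ ℝⁿ with 0 ∈ closure(A), the relation A ∼ B defined by 'there exist d₁, d₂ > 1 and C₁, C₂ > 0 such that B ⊆ ST_{d₁}(A;C₁) and A ⊆ ST_{d₂}(B;C₂) in some neighbourhood of 0' is reflexive, symmetric, and transitive. -/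
open Filter Metric Topology MeasureTheory

noncomputable section

/-- Key transitivity lemma for sea-tangle containments. -/
lemma st_trans_key {n : ℕ} {A B C : Set (E n)} (hA : (0:E n) ∈ closure A)
    (hBne : B.Nonempty) {d₁ C₁ d₂ C₂ ε₁ ε₂ : ℝ}
    (hd₁ : 1 < d₁) (hC₁ : 0 < C₁) (hd₂ : 1 < d₂) (hC₂ : 0 < C₂)
    (hε₁ : 0 < ε₁) (hε₂ : 0 < ε₂)
    (h1 : B ∩ ball (0:E n) ε₁ ⊆ STg n d₁ C₁ A)
    (h2 : C ∩ ball (0:E n) ε₂ ⊆ STg n d₂ C₂ B) :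
    ∃ d > (1:ℝ), ∃ K > (0:ℝ), ∃ ε > (0:ℝ), C ∩ ball (0:E n) ε ⊆ STg n d K A := by
  have hAne : A.Nonempty := closure_nonempty_iff.1 ⟨0, hA⟩
  set M : ℝ := C₂ + 2 with hM
  have hMpos : 0 < M := by positivity
  refine ⟨min d₁ d₂, lt_min hd₁ hd₂, (C₂ + 1) + C₁ * M ^ d₁, by positivity,
    min 1 (min ε₂ (ε₁ / M)), by positivity, ?_⟩
  rintro x ⟨hxC, hxb⟩
  rw [mem_ball_zero_iff] at hxb
  have hx1 : ‖x‖ < 1 := lt_of_lt_of_le hxb (min_le_left _ _)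
  have hxε₂ : ‖x‖ < ε₂ := lt_of_lt_of_le hxb ((min_le_right _ _).trans (min_le_left _ _))
  have hxε₁ : ‖x‖ < ε₁ / M := lt_of_lt_of_le hxb ((min_le_right _ _).trans (min_le_right _ _))
  by_cases hx0 : x = 0
  · subst hx0
    show infDist (0:E n) A ≤ _
    rw [Metric.infDist_zero_of_mem_closure hA]
    positivity
  · have hxpos : 0 < ‖x‖ := norm_pos_iff.2 hx0
    have hxB : infDist x B ≤ C₂ * ‖x‖ ^ d₂ := h2 ⟨hxC, mem_ball_zero_iff.2 hxε₂⟩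
    have hlt : infDist x B < (C₂ + 1) * ‖x‖ ^ d₂ := by
      have hp : (0:ℝ) < ‖x‖ ^ d₂ := Real.rpow_pos_of_pos hxpos _
      nlinarith
    obtain ⟨b, hbB, hdb⟩ := (Metric.infDist_lt_iff hBne).1 hlt
    have hpow : ‖x‖ ^ d₂ ≤ ‖x‖ := by
      calc ‖x‖ ^ d₂ ≤ ‖x‖ ^ (1:ℝ) :=
            Real.rpow_le_rpow_of_exponent_ge hxpos hx1.le hd₂.le
        _ = ‖x‖ := Real.rpow_one _
    have hdb' : dist x b ≤ (C₂ + 1) * ‖x‖ := by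
      calc dist x b ≤ (C₂ + 1) * ‖x‖ ^ d₂ := hdb.le
        _ ≤ (C₂ + 1) * ‖x‖ := by nlinarith
    have hbnorm : ‖b‖ ≤ M * ‖x‖ := by
      have h3 : dist b 0 ≤ dist b x + dist x 0 := dist_triangle b x 0
      rw [dist_zero_right, dist_zero_right, dist_comm b x] at h3
      nlinarith
    have hbball : b ∈ ball (0:E n) ε₁ := by
      rw [mem_ball_zero_iff]
      calc ‖b‖ ≤ M * ‖x‖ := hbnorm
        _ < M * (ε₁ / M) := by exact (mul_lt_mul_iff_right₀ hMpos).2 hxε₁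
        _ = ε₁ := by field_simp
    have hbA : infDist b A ≤ C₁ * ‖b‖ ^ d₁ := h1 ⟨hbB, hbball⟩
    have hbA' : infDist b A ≤ C₁ * M ^ d₁ * ‖x‖ ^ d₁ := by
      calc infDist b A ≤ C₁ * ‖b‖ ^ d₁ := hbA
        _ ≤ C₁ * (M * ‖x‖) ^ d₁ :=
            mul_le_mul_of_nonneg_left
              (Real.rpow_le_rpow (norm_nonneg _) hbnorm (by linarith)) hC₁.le
        _ = C₁ * M ^ d₁ * ‖x‖ ^ d₁ := by
            rw [Real.mul_rpow hMpos.le (norm_nonneg _)]; ring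
    have hpow1 : ‖x‖ ^ d₁ ≤ ‖x‖ ^ min d₁ d₂ :=
      Real.rpow_le_rpow_of_exponent_ge hxpos hx1.le (min_le_left _ _)
    have hpow2 : ‖x‖ ^ d₂ ≤ ‖x‖ ^ min d₁ d₂ :=
      Real.rpow_le_rpow_of_exponent_ge hxpos hx1.le (min_le_right _ _)
    show infDist x A ≤ ((C₂ + 1) + C₁ * M ^ d₁) * ‖x‖ ^ min d₁ d₂
    calc infDist x A ≤ infDist b A + dist x b := Metric.infDist_le_infDist_add_dist
      _ ≤ C₁ * M ^ d₁ * ‖x‖ ^ d₁ + (C₂ + 1) * ‖x‖ ^ d₂ := by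
          have := hdb.le; linarith
      _ ≤ C₁ * M ^ d₁ * ‖x‖ ^ min d₁ d₂ + (C₂ + 1) * ‖x‖ ^ min d₁ d₂ := by
          have t1 := mul_le_mul_of_nonneg_left hpow1
            (by positivity : (0:ℝ) ≤ C₁ * M ^ d₁)
          have t2 := mul_le_mul_of_nonneg_left hpow2
            (by positivity : (0:ℝ) ≤ C₂ + 1)
          linarith
      _ = ((C₂ + 1) + C₁ * M ^ d₁) * ‖x‖ ^ min d₁ d₂ := by ring

theorem stmt3 (n : ℕ) :
    (∀ A : Set (E n), (0 : E n) ∈ closure A → STEquiv n A A) ∧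
    (∀ A B : Set (E n), (0 : E n) ∈ closure A → (0 : E n) ∈ closure B →
      STEquiv n A B → STEquiv n B A) ∧
    (∀ A B C : Set (E n), (0 : E n) ∈ closure A → (0 : E n) ∈ closure B →
      (0 : E n) ∈ closure C → STEquiv n A B → STEquiv n B C → STEquiv n A C) := by
  refine ⟨?_, ?_, ?_⟩
  · intro A hA
    refine ⟨2, one_lt_two, 1, one_pos, 2, one_lt_two, 1, one_pos, 1, one_pos, ?_, ?_⟩ <;>
    · rintro x ⟨hxA, -⟩
      show infDist x A ≤ 1 * ‖x‖ ^ (2:ℝ)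
      rw [Metric.infDist_zero_of_mem hxA]
      positivity
  · rintro A B _ _ ⟨d₁, hd₁, C₁, hC₁, d₂, hd₂, C₂, hC₂, ε, hε, h1, h2⟩
    exact ⟨d₂, hd₂, C₂, hC₂, d₁, hd₁, C₁, hC₁, ε, hε, h2, h1⟩
  · rintro A B C hA hB hC ⟨d₁, hd₁, C₁, hC₁, d₂, hd₂, C₂, hC₂, ε, hε, h1, h2⟩
      ⟨e₁, he₁, D₁, hD₁, e₂, he₂, D₂, hD₂, δ, hδ, g1, g2⟩
    have hBne : B.Nonempty := by
      rw [← closure_nonempty_iff]; exact ⟨0, hB⟩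
    obtain ⟨da, hda, Ka, hKa, εa, hεa, hCA⟩ :=
      st_trans_key hA hBne hd₁ hC₁ he₁ hD₁ hε hδ h1 g1
    obtain ⟨db, hdb, Kb, hKb, εb, hεb, hAC⟩ :=
      st_trans_key hC hBne he₂ hD₂ hd₂ hC₂ hδ hε g2 h2
    refine ⟨da, hda, Ka, hKa, db, hdb, Kb, hKb, min εa εb, lt_min hεa hεb, ?_, ?_⟩
    · exact fun x hx => hCA ⟨hx.1, ball_subset_ball (min_le_left _ _) hx.2⟩
    · exact fun x hx => hAC ⟨hx.1, ball_subset_ball (min_le_right _ _) hx.2⟩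
end
end

section
/- ST-equivalence is preserved by bi-Lipschitz homeomorphisms fixing 0: if φ : ℝⁿ → ℝⁿ is a bi-Lipschitz bijection with φ(0) = 0 and A, B ⊆ ℝⁿ with 0 ∈ closure(A) ∩ closure(B) are ST-equivalent, then φ(A) and φ(B) are ST-equivalent. -/
open Filter Metric Topology MeasureTheory

noncomputable section

lemma key_st (n : ℕ) (φ : E n → E n) (hφ0 : φ 0 = 0)
    (K₁ K₂ : ℝ) (hK₁ : 0 < K₁) (hK : K₁ ≤ K₂)
    (hlip : ∀ x y : E n, K₁ * ‖x - y‖ ≤ ‖φ x - φ y‖ ∧ ‖φ x - φ y‖ ≤ K₂ * ‖x - y‖)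
    (A B : Set (E n)) (hAne : A.Nonempty)
    (d C ε : ℝ) (hd : 1 < d) (hC : 0 < C)
    (hsub : B ∩ ball (0 : E n) ε ⊆ STg n d C A) :
    (φ '' B) ∩ ball (0 : E n) (K₁ * ε) ⊆ STg n d (C * K₂ / K₁ ^ d) (φ '' A) := by
  rintro y ⟨⟨x, hxB, rfl⟩, hyball⟩
  have hK₂ : 0 < K₂ := lt_of_lt_of_le hK₁ hK
  have hnx : K₁ * ‖x‖ ≤ ‖φ x‖ := by
    have := (hlip x 0).1; simpa [hφ0] using this
  have hxnorm : ‖x‖ ≤ ‖φ x‖ / K₁ := (le_div_iff₀ hK₁).2 (by linarith)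
  have hxball : ‖x‖ < ε := by
    have : ‖φ x‖ < K₁ * ε := by simpa [mem_ball, dist_eq_norm] using hyball
    nlinarith [norm_nonneg x]
  have hxST : Metric.infDist x A ≤ C * ‖x‖ ^ d :=
    hsub ⟨hxB, by simpa [mem_ball, dist_eq_norm] using hxball⟩
  have himg : Metric.infDist (φ x) (φ '' A) ≤ K₂ * Metric.infDist x A := by
    by_contra h
    push_neg at h
    have hr : Metric.infDist x A < Metric.infDist (φ x) (φ '' A) / K₂ :=
      (lt_div_iff₀ hK₂).2 (by linarith)
    obtain ⟨a, haA, hda⟩ := (infDist_lt_iff hAne).1 hr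
    have h1 : Metric.infDist (φ x) (φ '' A) ≤ dist (φ x) (φ a) :=
      infDist_le_dist_of_mem ⟨a, haA, rfl⟩
    have h2 : dist (φ x) (φ a) ≤ K₂ * dist x a := by
      rw [dist_eq_norm, dist_eq_norm]; exact (hlip x a).2
    have h3 : K₂ * dist x a < Metric.infDist (φ x) (φ '' A) := by
      have := (lt_div_iff₀ hK₂).1 hda
      linarith [mul_comm (dist x a) K₂]
    linarith
  have hd0 : (0:ℝ) ≤ d := by linarith
  have hpow : ‖x‖ ^ d ≤ ‖φ x‖ ^ d / K₁ ^ d := by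
    rw [← Real.div_rpow (norm_nonneg _) hK₁.le]
    exact Real.rpow_le_rpow (norm_nonneg _) hxnorm hd0
  have h := mul_le_mul_of_nonneg_left hpow (by positivity : (0:ℝ) ≤ K₂ * C)
  calc Metric.infDist (φ x) (φ '' A) ≤ K₂ * Metric.infDist x A := himg
    _ ≤ K₂ * (C * ‖x‖ ^ d) := mul_le_mul_of_nonneg_left hxST hK₂.le
    _ = K₂ * C * ‖x‖ ^ d := by ring
    _ ≤ K₂ * C * (‖φ x‖ ^ d / K₁ ^ d) := h
    _ = C * K₂ / K₁ ^ d * ‖φ x‖ ^ d := by ring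

theorem stmt4 (n : ℕ) (φ : E n → E n) (hbij : Function.Bijective φ) (hφ0 : φ 0 = 0)
    (K₁ K₂ : ℝ) (hK₁ : 0 < K₁) (hK : K₁ ≤ K₂)
    (hlip : ∀ x y : E n, K₁ * ‖x - y‖ ≤ ‖φ x - φ y‖ ∧ ‖φ x - φ y‖ ≤ K₂ * ‖x - y‖)
    (A B : Set (E n)) (hA : (0 : E n) ∈ closure A) (hB : (0 : E n) ∈ closure B)
    (hAB : STEquiv n A B) : STEquiv n (φ '' A) (φ '' B) := by
  obtain ⟨d₁, hd₁, C₁, hC₁, d₂, hd₂, C₂, hC₂, ε, hε, hBA, hAB'⟩ := hAB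
  have hAne : A.Nonempty := by
    rcases closure_nonempty_iff.1 ⟨0, hA⟩ with h; exact h
  have hBne : B.Nonempty := by
    rcases closure_nonempty_iff.1 ⟨0, hB⟩ with h; exact h
  have hK₂ : 0 < K₂ := hK₁.trans_le hK
  refine ⟨d₁, hd₁, C₁ * K₂ / K₁ ^ d₁,
    div_pos (mul_pos hC₁ hK₂) (Real.rpow_pos_of_pos hK₁ _), d₂, hd₂,
    C₂ * K₂ / K₁ ^ d₂,
    div_pos (mul_pos hC₂ hK₂) (Real.rpow_pos_of_pos hK₁ _),
    K₁ * ε, by positivity, ?_, ?_⟩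
  · exact key_st n φ hφ0 K₁ K₂ hK₁ hK hlip A B hAne d₁ C₁ ε hd₁ hC₁ hBA
  · exact key_st n φ hφ0 K₁ K₂ hK₁ hK hlip B A hBne d₂ C₂ ε hd₂ hC₂ hAB'
end
end

section
/- (Key Lemma for general sets) Let h : ℝⁿ → ℝⁿ be a bi-Lipschitz bijection with h(0) = 0, and let A, B ⊆ ℝⁿ with 0 ∈ closure(A \ {0}) ∩ closure(B \ {0}). Suppose there exist d > 1 and C > 0 such that A ⊆ ST_d(B;C) in a neighbourhood of 0. Then D(h(A)) ⊆ D(h(B)). -/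
/-!
Take `a ∈ D(h(A))`, realised by `y i = h (x i)` with `x i ∈ A \ {0}`, `x i → 0`. Since `x i`
lies in `ST_d(B; C)`, there are `b i ∈ B` with `‖x i - b i‖ ≤ (C + 1) ‖x i‖ ^ d`, and `d > 1`
makes this `o(‖x i‖)`. A bi-Lipschitz map with `h 0 = 0` preserves `x - b = o(x)`, so
`h (b i)` is a sequence in `h(B)` with `y - h b = o(y)`, and such a sequence has the same
limit direction as `y`.
-/

open Filter Metric Topology MeasureTheory

noncomputable section

open Asymptotics

section Asymptotic

variable {ι : Type*} {l : Filter ι} {F G : Type*} [NormedAddCommGroup F] [NormedAddCommGroup G]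

lemma exists_mem_isLittleO_sub_of_infDist_le {B : Set F} (hB : B.Nonempty) {x : ι → F}
    (hx0 : ∀ i, x i ≠ 0) (hx : Tendsto x l (𝓝 0)) {d C : ℝ} (hd : 1 < d)
    (hST : ∀ᶠ i in l, infDist (x i) B ≤ C * ‖x i‖ ^ d) :
    ∃ b : ι → F, (∀ i, b i ∈ B) ∧ (fun i => x i - b i) =o[l] x := by
  have hnear : ∀ i, ∃ b ∈ B, dist (x i) b < infDist (x i) B + ‖x i‖ ^ d := fun i =>
    (infDist_lt_iff hB).1 <| lt_add_of_pos_right _ <|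
      Real.rpow_pos_of_pos (norm_pos_iff.2 (hx0 i)) d
  choose b hbB hb using hnear
  have hsmall : Tendsto (fun i => (C + 1) * ‖x i‖ ^ (d - 1)) l (𝓝 0) := by
    have h := ((tendsto_norm_zero.comp hx).rpow_const (p := d - 1) (Or.inr (by linarith))).const_mul
      (C + 1)
    rwa [Real.zero_rpow (by linarith), mul_zero] at h
  refine ⟨b, hbB, isLittleO_iff.2 fun c hc => ?_⟩
  filter_upwards [hST, hsmall.eventually_lt_const hc] with i hiST hic
  have hxpos : 0 < ‖x i‖ := norm_pos_iff.2 (hx0 i)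
  calc ‖x i - b i‖ ≤ (C + 1) * ‖x i‖ ^ d := by rw [← dist_eq_norm]; linarith [hb i]
    _ = (C + 1) * ‖x i‖ ^ (d - 1) * ‖x i‖ := by
      rw [Real.rpow_sub_one hxpos.ne', mul_assoc, div_mul_cancel₀ _ hxpos.ne']
    _ ≤ c * ‖x i‖ := by gcongr

lemma isBigO_comp_of_mul_norm_le {h : F → G} {K : ℝ} (hK : 0 < K)
    (hlow : ∀ z, K * ‖z‖ ≤ ‖h z‖) (x : ι → F) : x =O[l] fun i => h (x i) :=
  IsBigO.of_bound K⁻¹ <| Eventually.of_forall fun i => by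
    rw [inv_mul_eq_div, le_div_iff₀ hK, mul_comm]
    exact hlow (x i)

lemma isLittleO_map_sub_map {h : F → G} {K₁ K₂ : ℝ} (hK₁ : 0 < K₁)
    (hlow : ∀ z, K₁ * ‖z‖ ≤ ‖h z‖) (hup : ∀ x y, ‖h x - h y‖ ≤ K₂ * ‖x - y‖)
    {x b : ι → F} (hxb : (fun i => x i - b i) =o[l] x) :
    (fun i => h (x i) - h (b i)) =o[l] fun i => h (x i) :=
  (IsBigO.of_bound K₂ (Eventually.of_forall fun i => hup (x i) (b i))).trans_isLittleO
    (hxb.trans_isBigO (isBigO_comp_of_mul_norm_le hK₁ hlow x))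

variable [NormedSpace ℝ F]

lemma tendsto_inv_norm_smul_of_isLittleO {u v : ι → F} {a : F} (ha : ‖a‖ = 1)
    (hua : Tendsto (fun i => ‖u i‖⁻¹ • u i) l (𝓝 a)) (huv : (fun i => u i - v i) =o[l] u) :
    Tendsto (fun i => ‖v i‖⁻¹ • v i) l (𝓝 a) := by
  have hsmall : Tendsto (fun i => ‖u i‖⁻¹ • (u i - v i)) l (𝓝 0) :=
    (isLittleO_one_iff ℝ).1 <|
      ((isBigO_refl (fun i => ‖u i‖⁻¹) l).smul_isLittleO huv).trans_isBigO (hua.isBigO_one ℝ)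
  have hscaled : Tendsto (fun i => ‖u i‖⁻¹ • v i) l (𝓝 a) := by
    simpa only [smul_sub, sub_sub_cancel, sub_zero] using hua.sub hsmall
  have hcont : ContinuousAt (fun w : F => ‖w‖⁻¹ • w) a :=
    (continuous_norm.continuousAt.inv₀ (by simp [ha])).smul continuousAt_id
  -- normalising is continuous at the unit vector `a` and ignores the positive factor `‖u i‖⁻¹`
  have hlim := hcont.tendsto.comp hscaled
  rw [ha, inv_one, one_smul] at hlim
  refine hlim.congr' ?_
  filter_upwards [hua.eventually_ne (norm_ne_zero_iff.1 (by simp [ha]))] with i hi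
  have hu : 0 < ‖u i‖ := norm_pos_iff.2 fun h0 => hi (by simp [h0])
  exact NormedSpace.normalize_smul_of_pos (inv_pos.2 hu) (v i)

end Asymptotic

section Directions

variable {n : ℕ}

lemma mem_Dir_of_eventually {S : Set (E n)} {a : E n} {x : ℕ → E n} (ha : ‖a‖ = 1)
    (hxS : ∀ᶠ i in atTop, x i ∈ S \ {0}) (hx : Tendsto x atTop (𝓝 0))
    (hxa : Tendsto (fun i => ‖x i‖⁻¹ • x i) atTop (𝓝 a)) : a ∈ Dir n S := by
  obtain ⟨N, hN⟩ := eventually_atTop.1 hxS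
  exact ⟨ha, fun i => x (i + N), fun i => hN _ (Nat.le_add_left N i),
    hx.comp (tendsto_add_atTop_nat N), hxa.comp (tendsto_add_atTop_nat N)⟩

lemma mem_Dir_of_isLittleO {T : Set (E n)} {a : E n} {u v : ℕ → E n} (ha : ‖a‖ = 1)
    (hu : Tendsto u atTop (𝓝 0)) (hua : Tendsto (fun i => ‖u i‖⁻¹ • u i) atTop (𝓝 a))
    (hvT : ∀ i, v i ∈ T) (huv : (fun i => u i - v i) =o[atTop] u) : a ∈ Dir n T := by
  have hva : Tendsto (fun i => ‖v i‖⁻¹ • v i) atTop (𝓝 a) :=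
    tendsto_inv_norm_smul_of_isLittleO ha hua huv
  have hv : Tendsto v atTop (𝓝 0) := by simpa using hu.sub (huv.trans_tendsto hu)
  refine mem_Dir_of_eventually ha ?_ hv hva
  filter_upwards [hva.eventually_ne (norm_ne_zero_iff.1 (by simp [ha]))] with i hi
  exact ⟨hvT i, fun h0 => hi (by simp [Set.mem_singleton_iff.1 h0])⟩

end Directions

theorem stmt5_general (n : ℕ) (h : E n → E n) (hh0 : h 0 = 0)
    (K₁ K₂ : ℝ) (hK₁ : 0 < K₁)
    (hlip : ∀ x y : E n, K₁ * ‖x - y‖ ≤ ‖h x - h y‖ ∧ ‖h x - h y‖ ≤ K₂ * ‖x - y‖)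
    (A B : Set (E n))
    (hB : (0 : E n) ∈ closure (B \ {0}))
    (d C ε : ℝ) (hd : 1 < d) (hε : 0 < ε)
    (hsub : A ∩ ball (0 : E n) ε ⊆ STg n d C B) :
    Dir n (h '' A) ⊆ Dir n (h '' B) := by
  rintro a ⟨ha, y, hyA, hy, hya⟩
  choose x hxA hxy using fun i => (hyA i).1
  obtain rfl : (fun i => h (x i)) = y := funext hxy
  have hlow : ∀ z, K₁ * ‖z‖ ≤ ‖h z‖ := fun z => by simpa [hh0] using (hlip z 0).1
  have hx0 : ∀ i, x i ≠ 0 := fun i hx => (hyA i).2 (by simp [hx, hh0])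
  have hx : Tendsto x atTop (𝓝 0) := (isBigO_comp_of_mul_norm_le hK₁ hlow x).trans_tendsto hy
  have hST : ∀ᶠ i in atTop, infDist (x i) B ≤ C * ‖x i‖ ^ d :=
    (hx.eventually (ball_mem_nhds 0 hε)).mono fun i hi => hsub ⟨hxA i, hi⟩
  obtain ⟨b, hbB, hxb⟩ := exists_mem_isLittleO_sub_of_infDist_le
    ((closure_nonempty_iff.1 ⟨0, hB⟩).mono Set.sdiff_subset) hx0 hx hd hST
  exact mem_Dir_of_isLittleO ha hy hya (fun i => Set.mem_image_of_mem h (hbB i))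
    (isLittleO_map_sub_map hK₁ hlow (fun x y => (hlip x y).2) hxb)

theorem stmt5 (n : ℕ) (h : E n → E n) (hbij : Function.Bijective h) (hh0 : h 0 = 0)
    (K₁ K₂ : ℝ) (hK₁ : 0 < K₁) (hK : K₁ ≤ K₂)
    (hlip : ∀ x y : E n, K₁ * ‖x - y‖ ≤ ‖h x - h y‖ ∧ ‖h x - h y‖ ≤ K₂ * ‖x - y‖)
    (A B : Set (E n)) (hA : (0 : E n) ∈ closure (A \ {0}))
    (hB : (0 : E n) ∈ closure (B \ {0}))
    (d C ε : ℝ) (hd : 1 < d) (hC : 0 < C) (hε : 0 < ε)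
    (hsub : A ∩ ball (0 : E n) ε ⊆ STg n d C B) :
    Dir n (h '' A) ⊆ Dir n (h '' B) :=
  stmt5_general n h hh0 K₁ K₂ hK₁ hlip A B hB d C ε hd hε hsub
end
end

section
/- Let A ⊆ ℝⁿ with 0 ∈ closure(A \ {0}). For any d > 1 and C > 0, D(ST_d(A;C)) = D(A); that is, the direction set of the sea-tangle neighbourhood of degree d > 1 equals the direction set of A. -/
open Filter Metric Topology MeasureTheory

noncomputable section

/-! Since `infDist x A = 0` on `A`, always `A ⊆ ST_d(A;C)`. Conversely, on `ST_d(A;C)` the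
distance to `A` is at most `C‖x‖^d = o(‖x‖)` because `d > 1`, so every sequence `x i` in
`ST_d(A;C)` tending to `0` has partners `y i ∈ A` with `‖x i - y i‖ = o(‖x i‖)`, and such a
perturbation changes neither the limit `0` nor the limiting direction. -/

open Asymptotics

lemma continuousAt_normalize {V : Type*} [NormedAddCommGroup V] [NormedSpace ℝ V] {a : V}
    (ha : a ≠ 0) : ContinuousAt NormedSpace.normalize a :=
  (continuous_norm.continuousAt.inv₀ (norm_ne_zero_iff.mpr ha)).smul continuousAt_id

lemma isLittleO_norm_rpow_norm {V : Type*} [SeminormedAddCommGroup V] {d : ℝ} (hd : 1 < d) :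
    (fun x : V => ‖x‖ ^ d) =o[𝓝 0] (fun x => ‖x‖) := by
  have hsplit : ∀ x : V, ‖x‖ ^ d = ‖x‖ ^ (d - 1) * ‖x‖ := fun x => by
    rw [← Real.rpow_add_one' (norm_nonneg x) (by linarith), sub_add_cancel]
  have hsmall : Tendsto (fun x : V => ‖x‖ ^ (d - 1)) (𝓝 0) (𝓝 0) := by
    have := ((Real.continuousAt_rpow_const 0 (d - 1) (Or.inr (by linarith))).tendsto).comp
      (tendsto_norm_zero (E := V))
    simpa [Function.comp_def, Real.zero_rpow (by linarith : d - 1 ≠ 0)] using this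
  simpa [hsplit] using (isLittleO_one_iff ℝ).mpr hsmall |>.mul_isBigO (isBigO_refl _ _)

section Directions

variable {n : ℕ} {A B : Set (E n)}

lemma dir_mono (h : A ⊆ B) : Dir n A ⊆ Dir n B :=
  fun _ ⟨ha, x, hx, hx0, hxa⟩ => ⟨ha, x, fun i => ⟨h (hx i).1, (hx i).2⟩, hx0, hxa⟩

lemma mem_dir_of_eventually {a : E n} {y : ℕ → E n} (ha : ‖a‖ = 1)
    (hy : ∀ᶠ i in atTop, y i ∈ A \ {0}) (hy0 : Tendsto y atTop (𝓝 0))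
    (hya : Tendsto (fun i => NormedSpace.normalize (y i)) atTop (𝓝 a)) : a ∈ Dir n A := by
  obtain ⟨N, hN⟩ := eventually_atTop.mp hy
  exact ⟨ha, fun i => y (i + N), fun i => hN _ (Nat.le_add_left N i),
    hy0.comp (tendsto_add_atTop_nat N), hya.comp (tendsto_add_atTop_nat N)⟩

/- `‖x i‖⁻¹ • y i → a`, and `NormedSpace.normalize` is continuous at `a ≠ 0`. -/
lemma mem_dir_of_isLittleO {a : E n} {x y : ℕ → E n} (ha : ‖a‖ = 1) (hx : ∀ i, x i ≠ 0)
    (hx0 : Tendsto x atTop (𝓝 0))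
    (hxa : Tendsto (fun i => NormedSpace.normalize (x i)) atTop (𝓝 a))
    (hyA : ∀ i, y i ∈ A) (hxy : (fun i => x i - y i) =o[atTop] x) : a ∈ Dir n A := by
  have ha0 : a ≠ 0 := norm_ne_zero_iff.mp (by rw [ha]; exact one_ne_zero)
  have hscaled : Tendsto (fun i => ‖x i‖⁻¹ • y i) atTop (𝓝 a) := by
    have hsmall : Tendsto (fun i => ‖x i‖⁻¹ • (x i - y i)) atTop (𝓝 0) := by
      rw [tendsto_zero_iff_norm_tendsto_zero]
      simpa [norm_smul, div_eq_inv_mul] using hxy.norm_norm.tendsto_div_nhds_zero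
    simpa [NormedSpace.normalize, smul_sub, sub_sub_cancel] using hxa.sub hsmall
  refine mem_dir_of_eventually (y := y) ha ?_ ?_ ?_
  · filter_upwards [hscaled.eventually_ne ha0] with i hi
    exact ⟨hyA i, fun h => hi (by rw [Set.mem_singleton_iff.mp h, smul_zero])⟩
  · simpa using hx0.sub (hxy.trans_tendsto hx0)
  · have := (continuousAt_normalize ha0).tendsto.comp hscaled
    rw [NormedSpace.normalize_eq_self_of_norm_eq_one ha] at this
    exact this.congr fun i =>
      NormedSpace.normalize_smul_of_pos (inv_pos.mpr (norm_pos_iff.mpr (hx i))) _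

/- Each `x i` is matched with `y i ∈ A` at distance less than
`infDist (x i) A + ‖x i‖ / (i + 1)`; both terms are `o(‖x i‖)`. -/
lemma dir_subset_of_isLittleO_infDist (hA : A.Nonempty)
    (hBA : (fun x => infDist x A) =o[𝓝[B] 0] (fun x => ‖x‖)) : Dir n B ⊆ Dir n A := by
  rintro a ⟨ha, x, hx, hx0, hxa⟩
  have hxB : Tendsto x atTop (𝓝[B] 0) :=
    tendsto_nhdsWithin_iff.mpr ⟨hx0, .of_forall fun i => (hx i).1⟩
  have hnear : ∀ i : ℕ, ∃ y ∈ A, dist (x i) y < infDist (x i) A + 1 / (i + 1 : ℝ) * ‖x i‖ :=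
    fun i => (infDist_lt_iff hA).mp <|
      lt_add_of_pos_right _ (mul_pos (by positivity) (norm_pos_iff.mpr (hx i).2))
  choose y hyA hy using hnear
  have hslack : (fun i : ℕ => 1 / (i + 1 : ℝ) * ‖x i‖) =o[atTop] (fun i => ‖x i‖) := by
    simpa using ((isLittleO_one_iff ℝ).mpr tendsto_one_div_add_atTop_nhds_zero_nat).mul_isBigO
      (isBigO_refl (fun i => ‖x i‖) atTop)
  have hbound : (fun i => x i - y i) =O[atTop]
      (fun i => infDist (x i) A + 1 / (i + 1 : ℝ) * ‖x i‖) :=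
    .of_bound 1 <| .of_forall fun i => by
      rw [one_mul, ← dist_eq_norm]
      exact (hy i).le.trans (le_abs_self _)
  exact mem_dir_of_isLittleO ha (fun i => (hx i).2) hx0 hxa hyA
    (hbound.trans_isLittleO ((hBA.comp_tendsto hxB).add hslack)).of_norm_right

end Directions

section SeaTangle

variable {n : ℕ} {A : Set (E n)} {d C : ℝ}

lemma subset_sTg (hC : 0 ≤ C) : A ⊆ STg n d C A := fun x hx => by
  simp only [STg, Set.mem_ofPred_eq, infDist_zero_of_mem hx]
  positivity

lemma isLittleO_infDist_nhdsWithin_sTg (hd : 1 < d) :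
    (fun x => infDist x A) =o[𝓝[STg n d C A] 0] (fun x => ‖x‖) := by
  refine IsBigO.trans_isLittleO (g := fun x => C * ‖x‖ ^ d) ?_
    (((isLittleO_norm_rpow_norm hd).const_mul_left C).mono nhdsWithin_le_nhds)
  refine .of_bound 1 (eventually_nhdsWithin_of_forall fun x hx => ?_)
  rw [one_mul, Real.norm_of_nonneg infDist_nonneg]
  exact le_trans hx (le_abs_self _)

end SeaTangle

theorem stmt6 (n : ℕ) (A : Set (E n)) (h0 : (0 : E n) ∈ closure (A \ {0}))
    (d C : ℝ) (hd : 1 < d) (hC : 0 < C) :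
    Dir n (STg n d C A) = Dir n A := by
  have hA : A.Nonempty := (closure_nonempty_iff.mp ⟨0, h0⟩).mono Set.sdiff_subset
  exact (dir_subset_of_isLittleO_infDist hA (isLittleO_infDist_nhdsWithin_sTg hd)).antisymm
    (dir_mono (subset_sTg hC.le))
end
end

section
/- Let A, B ⊆ ℝⁿ with 0 ∈ closure(A \ {0}) ∩ closure(B \ {0}). If there exist d > 1 and C > 0 such that A ⊆ ST_d(B;C) in a neighbourhood of 0, then D(A) ⊆ D(B). In particular, if A and B are ST-equivalent then D(A) = D(B). -/
open Filter Metric Topology MeasureTheory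

noncomputable section

/-! A sequence `x i → 0` in `A \ {0}` eventually lies in the sea-tangle neighbourhood of `B`, so
there are `y i ∈ B` with `‖y i - x i‖ ≤ (C + 1) ‖x i‖ ^ d`, which is `o(‖x i‖)` because `d > 1`.
Thus `y ~ x`, and asymptotically equivalent sequences have the same limiting direction. -/

open Asymptotics NormedSpace

theorem norm_normalize_sub_normalize_le {F : Type*} [NormedAddCommGroup F] [NormedSpace ℝ F]
    (u : F) {v : F} (hv : v ≠ 0) :
    ‖normalize u - normalize v‖ ≤ 2 * ‖u - v‖ / ‖v‖ := by
  have hv' : 0 < ‖v‖ := norm_pos_iff.mpr hv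
  have hrescale : ‖(‖u‖⁻¹ - ‖v‖⁻¹) • u‖ ≤ ‖u - v‖ / ‖v‖ := by
    rcases eq_or_ne u 0 with rfl | hu
    · simp only [smul_zero, norm_zero]
      positivity
    · have hu' : 0 < ‖u‖ := norm_pos_iff.mpr hu
      rw [norm_smul, Real.norm_eq_abs, inv_sub_inv hu'.ne' hv'.ne', abs_div,
        abs_of_pos (mul_pos hu' hv')]
      calc |‖v‖ - ‖u‖| / (‖u‖ * ‖v‖) * ‖u‖ = |‖v‖ - ‖u‖| / ‖v‖ := by field_simp
        _ ≤ ‖u - v‖ / ‖v‖ := by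
          gcongr
          exact (abs_norm_sub_norm_le v u).trans_eq (norm_sub_rev v u)
  calc ‖normalize u - normalize v‖ = ‖(‖u‖⁻¹ - ‖v‖⁻¹) • u + ‖v‖⁻¹ • (u - v)‖ := by
        rw [NormedSpace.normalize, NormedSpace.normalize, smul_sub, sub_smul]
        abel_nf
    _ ≤ ‖u - v‖ / ‖v‖ + ‖u - v‖ / ‖v‖ := by
        refine (norm_add_le _ _).trans (add_le_add hrescale ?_)
        rw [norm_smul, norm_inv, norm_norm, inv_mul_eq_div]
    _ = 2 * ‖u - v‖ / ‖v‖ := by ring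

theorem Asymptotics.IsEquivalent.tendsto_normalize {α F : Type*} [NormedAddCommGroup F]
    [NormedSpace ℝ F] {l : Filter α} {u v : α → F} {a : F} (huv : u ~[l] v)
    (hv : ∀ᶠ i in l, v i ≠ 0) (hva : Tendsto (fun i => normalize (v i)) l (𝓝 a)) :
    Tendsto (fun i => normalize (u i)) l (𝓝 a) := by
  have hratio : Tendsto (fun i => 2 * (‖u i - v i‖ / ‖v i‖)) l (𝓝 0) := by
    simpa using huv.isLittleO.norm_norm.tendsto_div_nhds_zero.const_mul 2
  have hdiff : Tendsto (fun i => normalize (u i) - normalize (v i)) l (𝓝 0) :=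
    squeeze_zero_norm' (hv.mono fun i hi =>
      (norm_normalize_sub_normalize_le (u i) hi).trans_eq (mul_div_assoc _ _ _)) hratio
  simpa using hdiff.add hva

theorem isLittleO_norm_rpow_id {F : Type*} [NormedAddCommGroup F] {d : ℝ} (hd : 1 < d) :
    (fun x : F => ‖x‖ ^ d) =o[𝓝 0] fun x => x := by
  have hsmall : Tendsto (fun x : F => ‖x‖ ^ (d - 1)) (𝓝 0) (𝓝 0) := by
    simpa [Real.zero_rpow (by linarith : d - 1 ≠ 0)] using
      (tendsto_norm_zero (E := F)).rpow_const (p := d - 1) (Or.inr (by linarith))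
  refine isLittleO_norm_right.mp ?_
  refine ((((isLittleO_one_iff ℝ).2 hsmall).mul_isBigO (isBigO_refl _ _)).congr_left
    fun x => ?_).congr_right fun x => one_mul _
  rw [← Real.rpow_add_one' (norm_nonneg x) (by linarith), sub_add_cancel]

theorem Dir_subset_Dir_of_forall_exists_isEquivalent {n : ℕ} {A B : Set (E n)}
    (h : ∀ x : ℕ → E n, (∀ i, x i ∈ A \ {0}) → Tendsto x atTop (𝓝 0) →
      ∃ y : ℕ → E n, (∀ i, y i ∈ B) ∧ y ~[atTop] x) :
    Dir n A ⊆ Dir n B := by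
  rintro a ⟨ha, x, hxA, hx0, hxa⟩
  obtain ⟨y, hyB, hyx⟩ := h x hxA hx0
  have hy_ne : ∀ᶠ i in atTop, y i ≠ 0 :=
    hyx.isBigO_symm.eq_zero_imp.mono fun i hi hyi => (hxA i).2 (hi hyi)
  obtain ⟨N, hN⟩ := eventually_atTop.1 hy_ne
  exact ⟨ha, fun i => y (i + N), fun i => ⟨hyB _, hN _ (Nat.le_add_left N i)⟩,
    (tendsto_add_atTop_iff_nat N).2 (hyx.symm.tendsto_nhds hx0),
    (tendsto_add_atTop_iff_nat N).2 (hyx.tendsto_normalize (.of_forall fun i => (hxA i).2) hxa)⟩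

theorem exists_isEquivalent_of_subset_STg {n : ℕ} {A B : Set (E n)} {d C ε : ℝ} (hd : 1 < d)
    (hε : 0 < ε) (hB : B.Nonempty) (hAB : A ∩ ball 0 ε ⊆ STg n d C B) {x : ℕ → E n}
    (hxA : ∀ i, x i ∈ A \ {0}) (hx0 : Tendsto x atTop (𝓝 0)) :
    ∃ y : ℕ → E n, (∀ i, y i ∈ B) ∧ y ~[atTop] x := by
  have hnear : ∀ i, ∃ y ∈ B, dist (x i) y < infDist (x i) B + ‖x i‖ ^ d := fun i =>
    (infDist_lt_iff hB).1
      (lt_add_of_pos_right _ (Real.rpow_pos_of_pos (norm_pos_iff.2 (hxA i).2) d))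
  choose y hyB hy using hnear
  refine ⟨y, hyB, ?_⟩
  have hbound : ∀ᶠ i in atTop, ‖y i - x i‖ ≤ (C + 1) * ‖‖x i‖ ^ d‖ := by
    filter_upwards [hx0 (ball_mem_nhds 0 hε)] with i hi
    have hST : infDist (x i) B ≤ C * ‖x i‖ ^ d := hAB ⟨(hxA i).1, hi⟩
    rw [norm_sub_rev, ← dist_eq_norm, Real.norm_of_nonneg (by positivity)]
    linarith [hy i]
  exact (IsBigO.of_bound _ hbound).trans_isLittleO
    ((isLittleO_norm_rpow_id hd).comp_tendsto hx0)

theorem Dir_subset_Dir_of_subset_STg {n : ℕ} {A B : Set (E n)} {d C ε : ℝ} (hd : 1 < d)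
    (hε : 0 < ε) (hB : B.Nonempty) (hAB : A ∩ ball 0 ε ⊆ STg n d C B) :
    Dir n A ⊆ Dir n B :=
  Dir_subset_Dir_of_forall_exists_isEquivalent fun _ hxA hx0 =>
    exists_isEquivalent_of_subset_STg hd hε hB hAB hxA hx0

theorem stmt7 (n : ℕ) (A B : Set (E n)) (hA : (0 : E n) ∈ closure (A \ {0}))
    (hB : (0 : E n) ∈ closure (B \ {0})) :
    ((∃ d > (1:ℝ), ∃ C > (0:ℝ), ∃ ε > (0:ℝ), A ∩ ball (0 : E n) ε ⊆ STg n d C B) →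
      Dir n A ⊆ Dir n B) ∧
    (STEquiv n A B → Dir n A = Dir n B) := by
  have hA' : A.Nonempty := (closure_nonempty_iff.1 ⟨0, hA⟩).mono Set.sdiff_subset
  have hB' : B.Nonempty := (closure_nonempty_iff.1 ⟨0, hB⟩).mono Set.sdiff_subset
  refine ⟨fun ⟨d, hd, C, _, ε, hε, hAB⟩ => Dir_subset_Dir_of_subset_STg hd hε hB' hAB, ?_⟩
  rintro ⟨d₁, hd₁, C₁, _, d₂, hd₂, C₂, _, ε, hε, hBA, hAB⟩
  exact (Dir_subset_Dir_of_subset_STg hd₂ hε hB' hAB).antisymm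
    (Dir_subset_Dir_of_subset_STg hd₁ hε hA' hBA)
end
end

section
/- Let A ⊆ ℝⁿ with 0 ∈ closure(A \ {0}), and let LD(A) := {t·a : a ∈ D(A), t ≥ 0} be the tangent cone over the direction set. Then LD(A) satisfies condition (SSP): for every sequence a_m → 0 in ℝⁿ with a_m ≠ 0 and a_m/‖a_m‖ converging to a point of D(LD(A)), and for every ε > 0, there exist points b_m ∈ LD(A) with ‖a_m − b_m‖ ≤ ε·min(‖a_m‖, ‖b_m‖) for all sufficiently large m. -/
open Filter Metric Topology MeasureTheory

noncomputable section

/-!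
Every unit vector `‖x‖⁻¹ • x` with `0 ≠ x ∈ LD(A)` lies in `D(A)`, and `D(A)` is closed, so
`D(LD(A)) ⊆ D(A)`. Hence for `L ∈ D(LD(A))` the whole ray through `L` lies in `LD(A)`, and
`b_m := ‖a_m‖ • L` works: `‖a_m - b_m‖ = ‖a_m‖ · ‖a_m / ‖a_m‖ - L‖` and `‖b_m‖ = ‖a_m‖`.
-/

variable {n : ℕ}

lemma mem_dir_iff {A : Set (E n)} {a : E n} :
    a ∈ Dir n A ↔ ‖a‖ = 1 ∧
      ∀ ε > (0 : ℝ), ∃ x ∈ A \ {0}, ‖x‖ < ε ∧ dist (‖x‖⁻¹ • x) a < ε := by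
  constructor
  · rintro ⟨ha, x, hx, hx0, hxa⟩
    refine ⟨ha, fun ε hε => ?_⟩
    obtain ⟨i, hi0, hia⟩ :=
      ((hx0.eventually (ball_mem_nhds 0 hε)).and (hxa.eventually (ball_mem_nhds a hε))).exists
    exact ⟨x i, hx i, mem_ball_zero_iff.1 hi0, hia⟩
  · rintro ⟨ha, h⟩
    choose x hx hx0 hxa using fun k : ℕ => h (1 / (k + 1)) Nat.one_div_pos_of_nat
    refine ⟨ha, x, hx, squeeze_zero_norm (fun k => (hx0 k).le)
      tendsto_one_div_add_atTop_nhds_zero_nat, ?_⟩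
    exact tendsto_iff_dist_tendsto_zero.2 <| squeeze_zero (fun _ => dist_nonneg)
      (fun k => (hxa k).le) tendsto_one_div_add_atTop_nhds_zero_nat

lemma isClosed_dir (A : Set (E n)) : IsClosed (Dir n A) := by
  refine isClosed_of_closure_subset fun a ha => ?_
  have hsphere : closure (Dir n A) ⊆ sphere 0 1 :=
    closure_minimal (fun d hd => mem_sphere_zero_iff_norm.2 hd.1) isClosed_sphere
  refine mem_dir_iff.2 ⟨mem_sphere_zero_iff_norm.1 (hsphere ha), fun ε hε => ?_⟩
  obtain ⟨d, hd, had⟩ := Metric.mem_closure_iff.1 ha (ε / 2) (half_pos hε)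
  obtain ⟨x, hx, hx0, hxd⟩ := (mem_dir_iff.1 hd).2 (ε / 2) (half_pos hε)
  refine ⟨x, hx, hx0.trans (half_lt_self hε), ?_⟩
  calc dist (‖x‖⁻¹ • x) a ≤ dist (‖x‖⁻¹ • x) d + dist d a := dist_triangle _ _ _
    _ < ε / 2 + ε / 2 := add_lt_add hxd (by rwa [dist_comm])
    _ = ε := add_halves ε

lemma inv_norm_smul_mem_dir_of_mem_LD {A : Set (E n)} {x : E n} (hx : x ∈ LD n A)
    (hx0 : x ≠ 0) : ‖x‖⁻¹ • x ∈ Dir n A := by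
  obtain ⟨a, ha, t, ht, rfl⟩ := hx
  have ht0 : t ≠ 0 := by
    rintro rfl
    simp at hx0
  rwa [norm_smul, ha.1, mul_one, Real.norm_of_nonneg ht, smul_smul, inv_mul_cancel₀ ht0,
    one_smul]

lemma dir_LD_subset (A : Set (E n)) : Dir n (LD n A) ⊆ Dir n A := by
  rintro L ⟨-, x, hx, -, hxL⟩
  exact (isClosed_dir A).mem_of_tendsto hxL
    (Eventually.of_forall fun i => inv_norm_smul_mem_dir_of_mem_LD (hx i).1 (hx i).2)

lemma ssp_of_smul_mem {S : Set (E n)} (hS : ∀ L ∈ Dir n S, ∀ t : ℝ, 0 ≤ t → t • L ∈ S) :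
    SSP n S := by
  rintro a ha0 - ⟨L, hL, haL⟩ ε hε
  refine ⟨fun m => ‖a m‖ • L, fun m => hS L hL _ (norm_nonneg _), ?_⟩
  filter_upwards [haL.eventually (closedBall_mem_nhds L hε)] with m hm
  have hnorm : ‖‖a m‖ • L‖ = ‖a m‖ := by rw [norm_smul, hL.1, mul_one, norm_norm]
  have hdiff : a m - ‖a m‖ • L = ‖a m‖ • (‖a m‖⁻¹ • a m - L) := by
    rw [smul_sub, smul_smul, mul_inv_cancel₀ (norm_ne_zero_iff.2 (ha0 m)), one_smul]
  rw [hdiff, norm_smul, norm_norm, hnorm, min_self, mul_comm]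
  exact mul_le_mul_of_nonneg_right (by rwa [dist_eq_norm] at hm) (norm_nonneg _)

theorem stmt8_general (n : ℕ) (A : Set (E n)) :
    SSP n (LD n A) :=
  ssp_of_smul_mem fun L hL t ht => ⟨L, dir_LD_subset A hL, t, ht, rfl⟩

theorem stmt8 (n : ℕ) (A : Set (E n)) (h0 : (0 : E n) ∈ closure (A \ {0})) :
    SSP n (LD n A) :=
  stmt8_general n A
end
end

section
/- Let h : ℝⁿ → ℝⁿ be a bi-Lipschitz bijection with h(0) = 0, and let A, B ⊆ ℝⁿ with 0 ∈ closure(A \ {0}) ∩ closure(B \ {0}). Suppose B satisfies condition (SSP). If D(A) ⊆ D(B), then D(h(A)) ⊆ D(h(B)). -/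
open Filter Metric Topology MeasureTheory

noncomputable section

/-! Write a direction `v` of `h '' A` as the limit of `y m / ‖y m‖` with `y m = h (x m)`,
`x m ∈ A`. The lower Lipschitz bound forces `x m → 0`, so along a subsequence the directions of
`x m` converge to some `a ∈ Dir A ⊆ Dir B`. (SSP) then yields `b m ∈ B` with
`‖b m - x m‖ ≤ δ ‖x m‖`, and the two Lipschitz bounds turn this into
`‖h (b m) - y m‖ ≤ (K₂ / K₁) δ ‖y m‖`. Relatively close points have close directions, so letting
`δ → 0` and choosing diagonally exhibits `v` as a direction of `h '' B`. -/

theorem norm_inv_norm_smul_sub_le {F : Type*} [NormedAddCommGroup F] [NormedSpace ℝ F]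
    (p : F) {q : F} (hq : q ≠ 0) :
    ‖‖p‖⁻¹ • p - ‖q‖⁻¹ • q‖ ≤ 2 * ‖p - q‖ / ‖q‖ := by
  have hqn : 0 < ‖q‖ := norm_pos_iff.mpr hq
  rcases eq_or_ne p 0 with rfl | hp
  · simp [norm_smul, hq]
  have hpn : 0 < ‖p‖ := norm_pos_iff.mpr hp
  have hrescale : ‖(‖p‖⁻¹ - ‖q‖⁻¹) • p‖ ≤ ‖p - q‖ / ‖q‖ := by
    rw [norm_smul, Real.norm_eq_abs,
      show ‖p‖⁻¹ - ‖q‖⁻¹ = (‖q‖ - ‖p‖) / (‖p‖ * ‖q‖) by field_simp, abs_div,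
      abs_of_pos (mul_pos hpn hqn), div_mul_eq_mul_div, mul_comm ‖p‖ ‖q‖,
      mul_div_mul_right _ _ hpn.ne']
    gcongr
    rw [abs_sub_comm]
    exact abs_norm_sub_norm_le p q
  calc ‖‖p‖⁻¹ • p - ‖q‖⁻¹ • q‖ = ‖(‖p‖⁻¹ - ‖q‖⁻¹) • p + ‖q‖⁻¹ • (p - q)‖ := by
        rw [sub_smul, smul_sub]; abel_nf
    _ ≤ ‖(‖p‖⁻¹ - ‖q‖⁻¹) • p‖ + ‖q‖⁻¹ * ‖p - q‖ := by
        grw [norm_add_le, norm_smul _ (p - q), Real.norm_of_nonneg (inv_nonneg.mpr hqn.le)]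
    _ ≤ 2 * ‖p - q‖ / ‖q‖ := by
        rw [inv_mul_eq_div, mul_div_assoc]; linarith

theorem mem_Dir_of_forall_exists_approx {n : ℕ} {S : Set (E n)} {v : E n} (hv : ‖v‖ = 1)
    (H : ∀ ε > (0:ℝ), ∃ z ∈ S, z ≠ 0 ∧ ‖z‖ < ε ∧ ‖‖z‖⁻¹ • z - v‖ < ε) :
    v ∈ Dir n S := by
  choose z hzS hz0 hzn hzv using fun m : ℕ => H (1 / (m + 1)) Nat.one_div_pos_of_nat
  refine ⟨hv, z, fun i => ⟨hzS i, hz0 i⟩, ?_, ?_⟩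
  · exact squeeze_zero_norm (fun m => (hzn m).le) tendsto_one_div_add_atTop_nhds_zero_nat
  · rw [tendsto_iff_norm_sub_tendsto_zero]
    exact squeeze_zero (fun m => norm_nonneg _) (fun m => (hzv m).le)
      tendsto_one_div_add_atTop_nhds_zero_nat

theorem exists_mem_Dir_subseq_tendsto {n : ℕ} {A : Set (E n)} {x : ℕ → E n}
    (hxA : ∀ i, x i ∈ A \ {0}) (hx : Tendsto x atTop (𝓝 0)) :
    ∃ a ∈ Dir n A, ∃ φ : ℕ → ℕ, StrictMono φ ∧
      Tendsto (fun i => ‖x (φ i)‖⁻¹ • x (φ i)) atTop (𝓝 a) := by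
  have hsphere : ∀ i, ‖x i‖⁻¹ • x i ∈ sphere (0 : E n) 1 := fun i =>
    mem_sphere_zero_iff_norm.mpr (norm_smul_inv_norm (𝕜 := ℝ) (hxA i).2)
  obtain ⟨a, ha, φ, hφ, hφa⟩ := (isCompact_sphere (0 : E n) 1).tendsto_subseq hsphere
  exact ⟨a, ⟨mem_sphere_zero_iff_norm.mp ha, x ∘ φ, fun i => hxA (φ i),
    hx.comp hφ.tendsto_atTop, hφa⟩, φ, hφ, hφa⟩

theorem mem_Dir_of_forall_eventually_norm_sub_le {n : ℕ} {S : Set (E n)} {v : E n}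
    {q : ℕ → E n} (hv : ‖v‖ = 1) (hq0 : ∀ m, q m ≠ 0) (hq : Tendsto q atTop (𝓝 0))
    (hqv : Tendsto (fun m => ‖q m‖⁻¹ • q m) atTop (𝓝 v))
    (hS : ∀ t > (0:ℝ), ∃ p : ℕ → E n, (∀ m, p m ∈ S) ∧
      ∀ᶠ m in atTop, ‖p m - q m‖ ≤ t * ‖q m‖) :
    v ∈ Dir n S := by
  refine mem_Dir_of_forall_exists_approx hv fun ε hε => ?_
  set t := min (1 / 2 : ℝ) (ε / 4)
  have ht : 0 < t := by positivity
  have ht₁ : t ≤ 1 / 2 := min_le_left _ _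
  have ht₂ : t ≤ ε / 4 := min_le_right _ _
  obtain ⟨p, hpS, hpq⟩ := hS t ht
  have hq_small := (tendsto_norm_zero.comp hq).eventually_lt_const (half_pos hε)
  have hqv_close := (tendsto_iff_norm_sub_tendsto_zero.mp hqv).eventually_lt_const (half_pos hε)
  obtain ⟨m, hm, hqm, hvm⟩ := (hpq.and (hq_small.and hqv_close)).exists
  have hqn : 0 < ‖q m‖ := norm_pos_iff.mpr (hq0 m)
  have hpn : ‖p m‖ ≤ (1 + t) * ‖q m‖ := by
    linarith [norm_le_norm_sub_add (p m) (q m)]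
  refine ⟨p m, hpS m, ?_, ?_, ?_⟩
  · intro hp0
    rw [hp0, zero_sub, norm_neg] at hm
    nlinarith
  · simp only [Function.comp_apply] at hqm
    nlinarith
  · have hrel : ‖p m - q m‖ / ‖q m‖ ≤ t := (div_le_iff₀ hqn).mpr hm
    calc ‖‖p m‖⁻¹ • p m - v‖
        ≤ ‖‖p m‖⁻¹ • p m - ‖q m‖⁻¹ • q m‖ + ‖‖q m‖⁻¹ • q m - v‖ :=
          norm_sub_le_norm_sub_add_norm_sub _ _ _
      _ < 2 * ‖p m - q m‖ / ‖q m‖ + ε / 2 :=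
          add_lt_add_of_le_of_lt (norm_inv_norm_smul_sub_le _ (hq0 m)) hvm
      _ ≤ ε := by rw [mul_div_assoc]; linarith

theorem stmt10_general (n : ℕ) (h : E n → E n) (hh0 : h 0 = 0)
    (K₁ K₂ : ℝ) (hK₁ : 0 < K₁) (hK : K₁ ≤ K₂)
    (hlip : ∀ x y : E n, K₁ * ‖x - y‖ ≤ ‖h x - h y‖ ∧ ‖h x - h y‖ ≤ K₂ * ‖x - y‖)
    (A B : Set (E n)) (hSSP : SSP n B) (hdir : Dir n A ⊆ Dir n B) :
    Dir n (h '' A) ⊆ Dir n (h '' B) := by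
  rintro v ⟨hv, y, hy, hy0, hyv⟩
  choose x hxA hxy using fun i => (hy i).1
  have hK₁x : ∀ i, K₁ * ‖x i‖ ≤ ‖y i‖ := fun i => by
    simpa [hh0, hxy] using (hlip (x i) 0).1
  have hx0 : ∀ i, x i ≠ 0 := fun i hxi => (hy i).2 (by rw [← hxy, hxi, hh0]; rfl)
  have hx : Tendsto x atTop (𝓝 0) :=
    squeeze_zero_norm (fun i => (le_div_iff₀' hK₁).mpr (hK₁x i))
      (by simpa using hy0.norm.div_const K₁)
  obtain ⟨a, ha, φ, hφ, hφa⟩ := exists_mem_Dir_subseq_tendsto (fun i => ⟨hxA i, hx0 i⟩) hx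
  refine mem_Dir_of_forall_eventually_norm_sub_le (q := y ∘ φ) hv (fun m => (hy (φ m)).2)
    (hy0.comp hφ.tendsto_atTop) (hyv.comp hφ.tendsto_atTop) fun t ht => ?_
  have hK₂ : 0 < K₂ := hK₁.trans_le hK
  obtain ⟨b, hbB, hb⟩ := hSSP (x ∘ φ) (fun m => hx0 (φ m)) (hx.comp hφ.tendsto_atTop)
    ⟨a, hdir ha, hφa⟩ (K₁ / K₂ * t) (by positivity)
  refine ⟨h ∘ b, fun m => ⟨b m, hbB m, rfl⟩, hb.mono fun m hm => ?_⟩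
  calc ‖h (b m) - y (φ m)‖ = ‖h (b m) - h (x (φ m))‖ := by rw [hxy]
    _ ≤ K₂ * ‖b m - x (φ m)‖ := (hlip _ _).2
    _ ≤ K₂ * (K₁ / K₂ * t * ‖x (φ m)‖) := by
        rw [norm_sub_rev]
        gcongr
        exact hm.trans (by gcongr; exact min_le_left _ _)
    _ = t * (K₁ * ‖x (φ m)‖) := by field_simp
    _ ≤ t * ‖y (φ m)‖ := by grw [hK₁x]

theorem stmt10 (n : ℕ) (h : E n → E n) (hbij : Function.Bijective h) (hh0 : h 0 = 0)
    (K₁ K₂ : ℝ) (hK₁ : 0 < K₁) (hK : K₁ ≤ K₂)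
    (hlip : ∀ x y : E n, K₁ * ‖x - y‖ ≤ ‖h x - h y‖ ∧ ‖h x - h y‖ ≤ K₂ * ‖x - y‖)
    (A B : Set (E n)) (hA : (0 : E n) ∈ closure (A \ {0}))
    (hB : (0 : E n) ∈ closure (B \ {0}))
    (hSSP : SSP n B) (hdir : Dir n A ⊆ Dir n B) :
    Dir n (h '' A) ⊆ Dir n (h '' B) :=
  stmt10_general n h hh0 K₁ K₂ hK₁ hK hlip A B hSSP hdir
end
end

section
/- Let h : ℝⁿ → ℝⁿ be a bi-Lipschitz bijection with h(0) = 0, and A ⊆ ℝⁿ with 0 ∈ closure(A \ {0}). Then D(h(A)) ⊆ D(h(LD(A))), where LD(A) is the cone over D(A). Moreover, if A satisfies condition (SSP), then D(h(A)) = D(h(LD(A))). -/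
open Filter Metric Topology MeasureTheory

noncomputable section

/-!
Call `S` approximated at `0` by `T` if every small nonzero `x ∈ S` lies within `o(‖x‖)` of `T`.
Then `D(S) ⊆ D(T)`, since normalisation is `2/‖x‖`-Lipschitz at `x`, and the relation is transported
by a bi-Lipschitz `h` fixing `0`. By compactness of the unit sphere, `A` is approximated by `LD(A)`;
under (SSP), and using that `D(A)` is closed, `LD(A)` is approximated by `A`.
-/

open NormedSpace

lemma norm_mul_norm_normalize_sub_normalize_le {V : Type*} [NormedAddCommGroup V]
    [NormedSpace ℝ V] (u v : V) : ‖v‖ * ‖normalize u - normalize v‖ ≤ 2 * ‖u - v‖ := by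
  have hsplit : ‖v‖ • (normalize u - normalize v) = (‖v‖ - ‖u‖) • normalize u + (u - v) := by
    rw [smul_sub, sub_smul, norm_smul_normalize, norm_smul_normalize]; abel
  have hunit : ‖normalize u‖ ≤ 1 := by
    rcases eq_or_ne u 0 with rfl | hu
    · simp [normalize_zero_eq_zero]
    · exact (norm_normalize_eq_one_iff.2 hu).le
  calc ‖v‖ * ‖normalize u - normalize v‖
      = ‖(‖v‖ - ‖u‖) • normalize u + (u - v)‖ := by
        rw [← hsplit, norm_smul, Real.norm_of_nonneg (norm_nonneg v)]
    _ ≤ |‖v‖ - ‖u‖| * ‖normalize u‖ + ‖u - v‖ := by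
        rw [← Real.norm_eq_abs, ← norm_smul]; exact norm_add_le _ _
    _ ≤ ‖u - v‖ * 1 + ‖u - v‖ := by
        gcongr
        rw [norm_sub_rev u v]; exact abs_norm_sub_norm_le v u
    _ = 2 * ‖u - v‖ := by ring

section

variable {n : ℕ}

lemma mem_Dir_iff {S : Set (E n)} {a : E n} :
    a ∈ Dir n S ↔ ‖a‖ = 1 ∧ ∀ ε > 0, ∃ x ∈ S, x ≠ 0 ∧ ‖x‖ < ε ∧ ‖normalize x - a‖ < ε := by
  constructor
  · rintro ⟨ha, x, hxS, hx0, hxa⟩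
    refine ⟨ha, fun ε hε => ?_⟩
    have hsmall : ∀ᶠ i in atTop, ‖x i‖ < ε := by
      simpa only [mem_ball, dist_zero_right] using hx0.eventually (ball_mem_nhds 0 hε)
    have hclose : ∀ᶠ i in atTop, ‖‖x i‖⁻¹ • x i - a‖ < ε := by
      simpa only [mem_ball, dist_eq_norm] using hxa.eventually (ball_mem_nhds a hε)
    obtain ⟨i, hi_small, hi_close⟩ := (hsmall.and hclose).exists
    exact ⟨x i, (hxS i).1, (hxS i).2, hi_small, hi_close⟩
  · rintro ⟨ha, H⟩
    choose x hxS hx0 hx_small hx_close using fun k : ℕ => H (1 / ((k : ℝ) + 1)) (by positivity)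
    refine ⟨ha, x, fun i => ⟨hxS i, hx0 i⟩, ?_, ?_⟩
    · rw [tendsto_zero_iff_norm_tendsto_zero]
      exact squeeze_zero (fun _ => norm_nonneg _) (fun i => (hx_small i).le)
        tendsto_one_div_add_atTop_nhds_zero_nat
    · rw [tendsto_iff_norm_sub_tendsto_zero]
      exact squeeze_zero (fun _ => norm_nonneg _) (fun i => (hx_close i).le)
        tendsto_one_div_add_atTop_nhds_zero_nat

lemma Dir_subset_sphere (S : Set (E n)) : Dir n S ⊆ sphere 0 1 :=
  fun _ ha => mem_sphere_zero_iff_norm.2 ha.1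

lemma isClosed_Dir (S : Set (E n)) : IsClosed (Dir n S) := by
  refine isClosed_of_closure_subset fun a ha => ?_
  have ha_unit : ‖a‖ = 1 :=
    mem_sphere_zero_iff_norm.1 (closure_minimal (Dir_subset_sphere S) isClosed_sphere ha)
  refine mem_Dir_iff.2 ⟨ha_unit, fun ε hε => ?_⟩
  obtain ⟨b, hb, hab⟩ := Metric.mem_closure_iff.1 ha (ε / 2) (by positivity)
  rw [dist_comm, dist_eq_norm] at hab
  obtain ⟨x, hxS, hx0, hx_small, hx_close⟩ := (mem_Dir_iff.1 hb).2 (ε / 2) (by positivity)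
  refine ⟨x, hxS, hx0, by linarith, ?_⟩
  calc ‖normalize x - a‖ ≤ ‖normalize x - b‖ + ‖b - a‖ := norm_sub_le_norm_sub_add_norm_sub _ _ _
    _ < ε := by linarith

lemma normalize_mem_Dir_of_mem_LD {A : Set (E n)} {z : E n} (hz : z ∈ LD n A) (hz0 : z ≠ 0) :
    normalize z ∈ Dir n A := by
  obtain ⟨a, ha, t, ht, rfl⟩ := hz
  have ht0 : 0 < t := ht.lt_of_ne (by rintro rfl; exact hz0 (zero_smul ℝ a))
  rwa [normalize_smul_of_pos ht0, normalize_eq_self_of_norm_eq_one ha.1]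

def ApproxAtZero {X : Type*} [NormedAddCommGroup X] (S T : Set X) : Prop :=
  ∀ ε > (0 : ℝ), ∀ᶠ x in 𝓝 (0 : X), x ∈ S → x ≠ 0 → ∃ y ∈ T, ‖x - y‖ ≤ ε * ‖x‖

lemma ApproxAtZero.Dir_subset {n : ℕ} {S T : Set (E n)} (hST : ApproxAtZero S T) :
    Dir n S ⊆ Dir n T := by
  intro a ha
  obtain ⟨ha_unit, H⟩ := mem_Dir_iff.1 ha
  refine mem_Dir_iff.2 ⟨ha_unit, fun ε hε => ?_⟩
  set δ := min (ε / 4) (1 / 2)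
  obtain ⟨r, hr, hr_approx⟩ := Metric.eventually_nhds_iff.1 (hST δ (by positivity))
  obtain ⟨x, hxS, hx0, hx_small, hx_close⟩ := H (min r (ε / 2)) (by positivity)
  have hx_pos : 0 < ‖x‖ := norm_pos_iff.2 hx0
  obtain ⟨y, hyT, hxy⟩ :=
    hr_approx (by rw [dist_zero_right]; exact hx_small.trans_le (min_le_left _ _)) hxS hx0
  have hxy_half : ‖x - y‖ ≤ ‖x‖ / 2 :=
    calc ‖x - y‖ ≤ δ * ‖x‖ := hxy
      _ ≤ 1 / 2 * ‖x‖ := by gcongr; exact min_le_right _ _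
      _ = ‖x‖ / 2 := by ring
  have hy0 : y ≠ 0 := by
    rintro rfl
    rw [sub_zero] at hxy_half
    linarith
  have hy_norm : ‖y‖ ≤ ‖x‖ + ‖x - y‖ := by
    simpa only [sub_sub_cancel] using norm_sub_le x (x - y)
  have hxy_dir : ‖normalize y - normalize x‖ ≤ ε / 2 := by
    refine le_of_mul_le_mul_left ?_ hx_pos
    calc ‖x‖ * ‖normalize y - normalize x‖ ≤ 2 * ‖y - x‖ :=
          norm_mul_norm_normalize_sub_normalize_le y x
      _ ≤ 2 * (ε / 4 * ‖x‖) := by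
          rw [norm_sub_rev]; gcongr; exact hxy.trans (by gcongr; exact min_le_left _ _)
      _ = ‖x‖ * (ε / 2) := by ring
  refine ⟨y, hyT, hy0, by linarith [min_le_right r (ε / 2)], ?_⟩
  calc ‖normalize y - a‖ ≤ ‖normalize y - normalize x‖ + ‖normalize x - a‖ :=
        norm_sub_le_norm_sub_add_norm_sub _ _ _
    _ < ε := by linarith [min_le_right r (ε / 2)]

lemma ApproxAtZero.image {X Y : Type*} [NormedAddCommGroup X] [NormedAddCommGroup Y]
    {S T : Set X} (hST : ApproxAtZero S T) {h : X → Y} {K₁ K₂ : ℝ} (hK₁ : 0 < K₁)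
    (hK₂ : 0 < K₂) (hh0 : h 0 = 0) (hlow : ∀ x, K₁ * ‖x‖ ≤ ‖h x‖)
    (hup : ∀ x y, ‖h x - h y‖ ≤ K₂ * ‖x - y‖) : ApproxAtZero (h '' S) (h '' T) := by
  intro ε hε
  obtain ⟨r, hr, hr_approx⟩ := Metric.eventually_nhds_iff.1 (hST (ε * K₁ / K₂) (by positivity))
  refine Metric.eventually_nhds_iff.2 ⟨K₁ * r, by positivity, ?_⟩
  rintro _ hhs ⟨s, hs, rfl⟩ hhs0
  have hs0 : s ≠ 0 := by rintro rfl; exact hhs0 hh0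
  have hs_small : dist s 0 < r := by
    rw [dist_zero_right] at hhs ⊢
    exact lt_of_mul_lt_mul_left ((hlow s).trans_lt hhs) hK₁.le
  obtain ⟨t, ht, hst⟩ := hr_approx hs_small hs hs0
  refine ⟨h t, Set.mem_image_of_mem h ht, ?_⟩
  calc ‖h s - h t‖ ≤ K₂ * ‖s - t‖ := hup s t
    _ ≤ K₂ * (ε * K₁ / K₂ * ‖s‖) := by gcongr
    _ = ε * (K₁ * ‖s‖) := by field_simp
    _ ≤ ε * ‖h s‖ := by gcongr; exact hlow s

lemma approxAtZero_LD (A : Set (E n)) : ApproxAtZero A (LD n A) := by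
  intro ε hε
  by_contra hfar
  obtain ⟨x, hx_lim, hx⟩ := exists_seq_forall_of_frequently (not_eventually.1 hfar)
  simp only [Classical.not_imp, not_exists, not_and, not_le] at hx
  obtain ⟨c, hc, φ, hφ, hc_lim⟩ := (isCompact_sphere (0 : E n) 1).tendsto_subseq
    fun k => mem_sphere_zero_iff_norm.2 (norm_normalize_eq_one_iff.2 (hx k).2.1)
  have hcA : c ∈ Dir n A := ⟨mem_sphere_zero_iff_norm.1 hc, x ∘ φ,
    fun k => ⟨(hx (φ k)).1, (hx (φ k)).2.1⟩, hx_lim.comp hφ.tendsto_atTop, hc_lim⟩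
  obtain ⟨k, hk⟩ := (hc_lim.eventually (ball_mem_nhds c hε)).exists
  set y := x (φ k)
  refine ((hx (φ k)).2.2 (‖y‖ • c) ⟨c, hcA, ‖y‖, norm_nonneg y, rfl⟩).not_ge ?_
  have hyc : y - ‖y‖ • c = ‖y‖ • (normalize y - c) := by rw [smul_sub, norm_smul_normalize]
  calc ‖y - ‖y‖ • c‖ = ‖y‖ * ‖normalize y - c‖ := by rw [hyc, norm_smul, norm_norm]
    _ ≤ ε * ‖y‖ := by
        rw [mul_comm]; gcongr; exact (mem_ball_iff_norm.1 hk).le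

lemma SSP.approxAtZero_LD {A : Set (E n)} (hA : SSP n A) : ApproxAtZero (LD n A) A := by
  intro ε hε
  by_contra hfar
  obtain ⟨z, hz_lim, hz⟩ := exists_seq_forall_of_frequently (not_eventually.1 hfar)
  simp only [Classical.not_imp, not_exists, not_and, not_le] at hz
  have hdir : ∀ k, normalize (z k) ∈ Dir n A :=
    fun k => normalize_mem_Dir_of_mem_LD (hz k).1 (hz k).2.1
  obtain ⟨L, -, φ, hφ, hL_lim⟩ := (isCompact_sphere (0 : E n) 1).tendsto_subseq
    fun k => Dir_subset_sphere A (hdir k)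
  have hL : L ∈ Dir n A :=
    (isClosed_Dir A).mem_of_tendsto hL_lim (Eventually.of_forall fun k => hdir (φ k))
  obtain ⟨b, hbA, hb⟩ := hA (z ∘ φ) (fun k => (hz (φ k)).2.1)
    (hz_lim.comp hφ.tendsto_atTop) ⟨L, hL, hL_lim⟩ ε hε
  obtain ⟨k, hk⟩ := hb.exists
  exact (hk.trans (mul_le_mul_of_nonneg_left (min_le_left _ _) hε.le)).not_gt
    ((hz (φ k)).2.2 (b k) (hbA k))

end

theorem stmt11_general (n : ℕ) (h : E n → E n) (hh0 : h 0 = 0)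
    (K₁ K₂ : ℝ) (hK₁ : 0 < K₁) (hK : K₁ ≤ K₂)
    (hlip : ∀ x y : E n, K₁ * ‖x - y‖ ≤ ‖h x - h y‖ ∧ ‖h x - h y‖ ≤ K₂ * ‖x - y‖)
    (A : Set (E n)) :
    Dir n (h '' A) ⊆ Dir n (h '' (LD n A)) ∧
    (SSP n A → Dir n (h '' A) = Dir n (h '' (LD n A))) := by
  have hlow : ∀ x, K₁ * ‖x‖ ≤ ‖h x‖ := fun x => by simpa [hh0] using (hlip x 0).1
  have hup : ∀ x y, ‖h x - h y‖ ≤ K₂ * ‖x - y‖ := fun x y => (hlip x y).2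
  have hK₂ : 0 < K₂ := hK₁.trans_le hK
  have hforward : Dir n (h '' A) ⊆ Dir n (h '' (LD n A)) :=
    ((approxAtZero_LD A).image hK₁ hK₂ hh0 hlow hup).Dir_subset
  exact ⟨hforward, fun hA => hforward.antisymm
    (hA.approxAtZero_LD.image hK₁ hK₂ hh0 hlow hup).Dir_subset⟩

theorem stmt11 (n : ℕ) (h : E n → E n) (hbij : Function.Bijective h) (hh0 : h 0 = 0)
    (K₁ K₂ : ℝ) (hK₁ : 0 < K₁) (hK : K₁ ≤ K₂)
    (hlip : ∀ x y : E n, K₁ * ‖x - y‖ ≤ ‖h x - h y‖ ∧ ‖h x - h y‖ ≤ K₂ * ‖x - y‖)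
    (A : Set (E n)) (hA : (0 : E n) ∈ closure (A \ {0})) :
    Dir n (h '' A) ⊆ Dir n (h '' (LD n A)) ∧
    (SSP n A → Dir n (h '' A) = Dir n (h '' (LD n A))) :=
  stmt11_general n h hh0 K₁ K₂ hK₁ hK hlip A
end
end

section
/- Let A ⊆ ℝⁿ with 0 ∈ closure(A \ {0}), and d > 1, C > 0. For any sequence b_m ∈ ST_d(A;C) with b_m → 0 and b_m ≠ 0, there exists a sequence a_m ∈ A such that for every d₁ with 1 ≤ d₁ < d, ‖a_m − b_m‖ / ‖a_m‖^{d₁} → 0 as m → ∞. -/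
open Filter Metric Topology MeasureTheory

noncomputable section

/-!
Pick `a m ∈ A` with `‖a m - b m‖ < (C + 1) ‖b m‖ ^ d`; the slack `+ 1` makes this possible
because `b m ≠ 0`. Since `d > 1`, the error is `o(‖b m‖)`, hence `‖b m‖ = O(‖a m‖)`, and for
`0 ≤ d₁ < d` the error is `O(‖b m‖ ^ d) = o(‖b m‖ ^ d₁) = o(‖a m‖ ^ d₁)`.
-/

namespace Asymptotics

variable {α F : Type*} [NormedAddCommGroup F] {l : Filter α} {f g : α → F}

theorem isLittleO_norm_rpow_rpow_of_tendsto_zero (hf : Tendsto f l (𝓝 0)) {p q : ℝ}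
    (hp : 0 ≤ p) (hpq : p < q) :
    (fun x => ‖f x‖ ^ q) =o[l] fun x => ‖f x‖ ^ p := by
  have hsmall : Tendsto (fun x => ‖f x‖ ^ (q - p)) l (𝓝 0) := by
    simpa [Function.comp_def, Real.zero_rpow (sub_pos.2 hpq).ne'] using
      ((Real.continuousAt_rpow_const 0 (q - p) (Or.inr (sub_pos.2 hpq).le)).tendsto.comp
        (tendsto_zero_iff_norm_tendsto_zero.1 hf))
  refine (((isLittleO_one_iff ℝ).2 hsmall).mul_isBigO (isBigO_refl (fun x => ‖f x‖ ^ p) l)).congr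
    (fun x => ?_) fun x => one_mul _
  rw [← Real.rpow_add' (norm_nonneg _) (by linarith), sub_add_cancel]

theorem IsBigO.isBigO_of_sub_isBigO_norm_rpow (hf : Tendsto f l (𝓝 0)) {d : ℝ} (hd : 1 < d)
    (h : (fun x => g x - f x) =O[l] fun x => ‖f x‖ ^ d) : f =O[l] g := by
  have hsub : (fun x => g x - f x) =o[l] f :=
    isLittleO_norm_right.1 <| by
      simpa using h.trans_isLittleO (isLittleO_norm_rpow_rpow_of_tendsto_zero hf zero_le_one hd)
  simpa using hsub.right_isBigO_add

theorem tendsto_norm_sub_div_norm_rpow_of_isBigO (hf : Tendsto f l (𝓝 0)) {d p : ℝ}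
    (hd : 1 < d) (hp : 0 ≤ p) (hpd : p < d)
    (h : (fun x => g x - f x) =O[l] fun x => ‖f x‖ ^ d) :
    Tendsto (fun x => ‖g x - f x‖ / ‖g x‖ ^ p) l (𝓝 0) := by
  have hfg : (fun x => ‖f x‖ ^ p) =O[l] fun x => ‖g x‖ ^ p :=
    (h.isBigO_of_sub_isBigO_norm_rpow hf hd).norm_norm.rpow hp
      (Eventually.of_forall fun _ => norm_nonneg _)
  exact (h.norm_left.trans_isLittleO
    ((isLittleO_norm_rpow_rpow_of_tendsto_zero hf hp hpd).trans_isBigO hfg)).tendsto_div_nhds_zero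

end Asymptotics

open Asymptotics in
theorem stmt12_general (n : ℕ) (A : Set (E n)) (hA : (0 : E n) ∈ closure (A \ {0}))
    (d C : ℝ) (hd : 1 < d)
    (b : ℕ → E n) (hb : ∀ m, b m ∈ STg n d C A) (hb0 : ∀ m, b m ≠ 0)
    (hbt : Tendsto b atTop (nhds (0 : E n))) :
    ∃ a : ℕ → E n, (∀ m, a m ∈ A) ∧ ∀ d₁ : ℝ, 1 ≤ d₁ → d₁ < d →
      Tendsto (fun m => ‖a m - b m‖ / ‖a m‖ ^ d₁) atTop (nhds (0:ℝ)) := by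
  have hAne : A.Nonempty := (closure_nonempty_iff.1 ⟨0, hA⟩).mono Set.sdiff_subset
  have hnear : ∀ m, ∃ a ∈ A, dist (b m) a < (C + 1) * ‖b m‖ ^ d := fun m =>
    (infDist_lt_iff hAne).1 <| (hb m).trans_lt <| by
      have := Real.rpow_pos_of_pos (norm_pos_iff.2 (hb0 m)) d
      linarith
  choose a ha hab using hnear
  have hbigO : (fun m => a m - b m) =O[atTop] fun m => ‖b m‖ ^ d :=
    .of_bound (C + 1) <| Eventually.of_forall fun m => by
      rw [← dist_eq_norm, dist_comm, Real.norm_of_nonneg (by positivity)]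
      exact (hab m).le
  exact ⟨a, ha, fun d₁ hd₁ hd₁d =>
    tendsto_norm_sub_div_norm_rpow_of_isBigO hbt hd (by linarith) hd₁d hbigO⟩

theorem stmt12 (n : ℕ) (A : Set (E n)) (hA : (0 : E n) ∈ closure (A \ {0}))
    (d C : ℝ) (hd : 1 < d) (hC : 0 < C)
    (b : ℕ → E n) (hb : ∀ m, b m ∈ STg n d C A) (hb0 : ∀ m, b m ≠ 0)
    (hbt : Tendsto b atTop (nhds (0 : E n))) :
    ∃ a : ℕ → E n, (∀ m, a m ∈ A) ∧ ∀ d₁ : ℝ, 1 ≤ d₁ → d₁ < d →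
      Tendsto (fun m => ‖a m - b m‖ / ‖a m‖ ^ d₁) atTop (nhds (0:ℝ)) :=
  stmt12_general n A hA d C hd b hb hb0 hbt
end
end

section
/- Let α and β be linear subspaces of ℝⁿ with dim α < dim β. Then for any d > 1 and C₁, C₂ > 0, the ratio vol(ST_d(α;C₁) ∩ B_ε(0)) / vol(ST_d(β;C₂) ∩ B_ε(0)) tends to 0 as ε → 0, where vol denotes Lebesgue measure and B_ε(0) is the ball of radius ε about the origin. -/
/-!
Writing `x = u + v` with `u ∈ K`, `v ∈ Kᗮ` preserves volume and turns `infDist x K` into `‖v‖`.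
So inside `ball 0 ε` the horn `{x | infDist x K ≤ C * ‖x‖ ^ d}` lies in, and (for small `ε`,
`dim K > 0`, `d > 1`) contains, the product of a ball of radius of order `ε` in `K` and a ball of
radius of order `ε ^ d` in `Kᗮ`; its volume is therefore of exact order `ε ^ (dim K + d * dim Kᗮ)`.
Since `dim K + dim Kᗮ` is the ambient dimension, the exponent for `α` exceeds the one for `β` by
`(d - 1) * (dim β - dim α) > 0`, and the ratio of volumes tends to `0`.
-/

open Filter Metric Topology MeasureTheory

noncomputable section

open Module
open scoped ENNReal

section

variable {F : Type*} [NormedAddCommGroup F] [InnerProductSpace ℝ F]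

theorem norm_le_norm_add_of_inner_eq_zero {x y : F} (h : inner ℝ x y = (0 : ℝ)) :
    ‖y‖ ≤ ‖x + y‖ :=
  le_of_pow_le_pow_left₀ two_ne_zero (norm_nonneg _) <| by
    nlinarith [norm_add_sq_eq_norm_sq_add_norm_sq_real h, sq_nonneg ‖x‖]

theorem pow_mul_mul_rpow_pow {t : ℝ} (ht : 0 < t) (C d : ℝ) (k j : ℕ) :
    t ^ k * (C * t ^ d) ^ j = C ^ j * t ^ ((k : ℝ) + d * j) := by
  rw [mul_pow, ← Real.rpow_natCast (t ^ d), ← Real.rpow_mul ht.le, Real.rpow_add ht,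
    Real.rpow_natCast]
  ring

theorem eventually_mul_rpow_le_self {d : ℝ} (hd : 1 < d) (C : ℝ) :
    ∀ᶠ t in 𝓝 (0 : ℝ), 0 ≤ t → C * t ^ d ≤ t := by
  have hlim : Tendsto (fun t : ℝ => C * t ^ (d - 1)) (𝓝 0) (𝓝 0) := by
    simpa [Real.zero_rpow (sub_pos.2 hd).ne'] using
      ((Real.continuous_rpow_const (sub_pos.2 hd).le).const_mul C).tendsto 0
  filter_upwards [hlim.eventually_le_const one_pos] with t ht ht0
  calc C * t ^ d = C * t ^ (d - 1) * t := by
        rw [mul_assoc, ← Real.rpow_add_one' ht0 (by linarith), sub_add_cancel]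
    _ ≤ t := mul_le_of_le_one_left ht0 ht

namespace Submodule

variable (K : Submodule ℝ F)

theorem infDist_add_of_mem_orthogonal {u v : F} (hu : u ∈ K) (hv : v ∈ Kᗮ) :
    infDist (u + v) K = ‖v‖ := by
  refine le_antisymm ?_ ((le_infDist ⟨0, K.zero_mem⟩).2 fun y hy => ?_)
  · simpa using infDist_le_dist_of_mem (x := u + v) hu
  · rw [dist_eq_norm, add_sub_right_comm]
    exact norm_le_norm_add_of_inner_eq_zero
      (K.inner_right_of_mem_orthogonal (K.sub_mem hu hy) hv)

theorem norm_le_norm_add_of_mem_orthogonal {u v : F} (hu : u ∈ K) (hv : v ∈ Kᗮ) :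
    ‖u‖ ≤ ‖u + v‖ := by
  rw [add_comm]
  exact norm_le_norm_add_of_inner_eq_zero (K.inner_left_of_mem_orthogonal hu hv)

variable {d C : ℝ}

theorem preimage_add_horn_subset {ε : ℝ} (hd : 0 ≤ d) (hC : 0 ≤ C) :
    (fun p : K × Kᗮ => (p.1 : F) + p.2) ⁻¹' ({x | infDist x K ≤ C * ‖x‖ ^ d} ∩ ball 0 ε) ⊆
      ball 0 ε ×ˢ closedBall 0 (C * ε ^ d) := by
  rintro ⟨u, v⟩ ⟨hhorn, hball⟩
  rw [Set.mem_ofPred_eq, K.infDist_add_of_mem_orthogonal u.2 v.2] at hhorn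
  rw [mem_ball_zero_iff] at hball
  have hu := (K.norm_le_norm_add_of_mem_orthogonal u.2 v.2).trans_lt hball
  refine ⟨mem_ball_zero_iff.2 hu, mem_closedBall_zero_iff.2 (hhorn.trans ?_)⟩
  exact mul_le_mul_of_nonneg_left (Real.rpow_le_rpow (norm_nonneg _) hball.le hd) hC

/-- Centring the ball in `K` at distance `ε / 2` from `0` keeps `‖u‖ ≥ ε / 4`, which is what the
horn condition `‖v‖ ≤ C * ‖u + v‖ ^ d` needs. -/
theorem ball_prod_ball_subset_preimage_add_horn {ε : ℝ} (hε : 0 < ε) {w : K} (hw : ‖w‖ = 1)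
    (hd : 0 ≤ d) (hC : 0 ≤ C) (hsmall : C * (ε / 4) ^ d ≤ ε / 4) :
    ball ((ε / 2) • w) (ε / 4) ×ˢ ball 0 (C * (ε / 4) ^ d) ⊆
      (fun p : K × Kᗮ => (p.1 : F) + p.2) ⁻¹' ({x | infDist x K ≤ C * ‖x‖ ^ d} ∩ ball 0 ε) := by
  rintro ⟨u, v⟩ ⟨hu, hv⟩
  rw [mem_ball, dist_eq_norm] at hu
  rw [mem_ball_zero_iff] at hv
  have hcenter : ‖(ε / 2) • w‖ = ε / 2 := by simp [norm_smul, hw, abs_of_pos hε]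
  have hu_lo : ε / 4 ≤ ‖u‖ := by
    linarith [norm_sub_norm_le ((ε / 2) • w) u, norm_sub_rev u ((ε / 2) • w)]
  have hu_hi : ‖u‖ < 3 * ε / 4 := by linarith [norm_le_norm_add_norm_sub' u ((ε / 2) • w)]
  refine ⟨?_, mem_ball_zero_iff.2 ?_⟩
  · change infDist ((u : F) + v) K ≤ C * ‖(u : F) + v‖ ^ d
    rw [K.infDist_add_of_mem_orthogonal u.2 v.2]
    refine hv.le.trans (mul_le_mul_of_nonneg_left ?_ hC)
    exact Real.rpow_le_rpow (by positivity)
      (hu_lo.trans (K.norm_le_norm_add_of_mem_orthogonal u.2 v.2)) hd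
  · calc ‖(u : F) + v‖ ≤ ‖u‖ + ‖v‖ := norm_add_le _ _
      _ < 3 * ε / 4 + ε / 4 := add_lt_add_of_lt_of_le hu_hi (hv.le.trans hsmall)
      _ = ε := by ring

variable [FiniteDimensional ℝ F] [MeasurableSpace F] [BorelSpace F]

theorem volume_eq_volume_preimage_add (S : Set F) :
    volume S = volume ((fun p : K × Kᗮ => (p.1 : F) + p.2) ⁻¹' S) := by
  let φ : K × Kᗮ ≃ᵐ F :=
    (MeasurableEquiv.toLp 2 (K × Kᗮ)).trans K.orthogonalDecomposition.symm.toMeasurableEquiv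
  have hφ : MeasurePreserving φ :=
    (WithLp.volume_preserving_toLp K Kᗮ).trans
      (LinearIsometryEquiv.measurePreserving K.orthogonalDecomposition.symm)
  exact (hφ.measure_preimage_equiv S).symm

theorem exists_volume_horn_inter_ball_le (hd : 0 ≤ d) (hC : 0 ≤ C) :
    ∃ A ≠ ∞, ∀ ε > 0, volume ({x : F | infDist x K ≤ C * ‖x‖ ^ d} ∩ ball 0 ε) ≤
      A * ENNReal.ofReal (ε ^ ((finrank ℝ K : ℝ) + d * finrank ℝ Kᗮ)) := by
  refine ⟨ENNReal.ofReal (C ^ finrank ℝ Kᗮ) *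
      (volume (ball (0 : K) 1) * volume (ball (0 : Kᗮ) 1)), by finiteness, fun ε hε => ?_⟩
  calc volume ({x : F | infDist x K ≤ C * ‖x‖ ^ d} ∩ ball 0 ε)
      ≤ volume (ball (0 : K) ε ×ˢ closedBall (0 : Kᗮ) (C * ε ^ d)) :=
        (K.volume_eq_volume_preimage_add _).trans_le
          (measure_mono (K.preimage_add_horn_subset hd hC))
    _ = ENNReal.ofReal (ε ^ finrank ℝ K) * volume (ball (0 : K) 1) *
          (ENNReal.ofReal ((C * ε ^ d) ^ finrank ℝ Kᗮ) * volume (ball (0 : Kᗮ) 1)) := by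
        rw [Measure.volume_eq_prod, Measure.prod_prod, Measure.addHaar_ball_of_pos _ _ hε,
          Measure.addHaar_closedBall _ _ (by positivity)]
    _ = ENNReal.ofReal (ε ^ finrank ℝ K * (C * ε ^ d) ^ finrank ℝ Kᗮ) *
          (volume (ball (0 : K) 1) * volume (ball (0 : Kᗮ) 1)) := by
        rw [ENNReal.ofReal_mul (by positivity)]; ring
    _ = _ := by
        rw [pow_mul_mul_rpow_pow hε, ENNReal.ofReal_mul (by positivity)]; ring

theorem exists_le_volume_horn_inter_ball (hK : 0 < finrank ℝ K) (hd : 1 < d) (hC : 0 < C) :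
    ∃ B ≠ 0, ∀ᶠ ε in 𝓝[>] 0,
      B * ENNReal.ofReal (ε ^ ((finrank ℝ K : ℝ) + d * finrank ℝ Kᗮ)) ≤
        volume ({x : F | infDist x K ≤ C * ‖x‖ ^ d} ∩ ball 0 ε) := by
  have : Nontrivial K := Module.nontrivial_of_finrank_pos hK
  obtain ⟨w, hw⟩ := exists_norm_eq K zero_le_one
  set e : ℝ := (finrank ℝ K : ℝ) + d * finrank ℝ Kᗮ
  refine ⟨ENNReal.ofReal (C ^ finrank ℝ Kᗮ / 4 ^ e) *
      (volume (ball (0 : K) 1) * volume (ball (0 : Kᗮ) 1)), ?_, ?_⟩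
  · exact mul_ne_zero (ENNReal.ofReal_pos.2 (by positivity)).ne'
      (mul_ne_zero (measure_ball_pos _ _ one_pos).ne' (measure_ball_pos _ _ one_pos).ne')
  have hsmall : ∀ᶠ ε in 𝓝[>] (0 : ℝ), C * (ε / 4) ^ d ≤ ε / 4 := by
    have h4 : Tendsto (fun ε : ℝ => ε / 4) (𝓝[>] 0) (𝓝 0) :=
      ((continuous_id.div_const 4).tendsto' 0 0 (zero_div 4)).mono_left nhdsWithin_le_nhds
    filter_upwards [h4.eventually (eventually_mul_rpow_le_self hd C), self_mem_nhdsWithin]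
      with ε hε hpos
    exact hε (div_nonneg (le_of_lt hpos) zero_le_four)
  filter_upwards [hsmall, self_mem_nhdsWithin] with ε hsmall (hε : 0 < ε)
  have hscale : (ε / 4) ^ finrank ℝ K * (C * (ε / 4) ^ d) ^ finrank ℝ Kᗮ =
      C ^ finrank ℝ Kᗮ / 4 ^ e * ε ^ e := by
    rw [pow_mul_mul_rpow_pow (by positivity), Real.div_rpow hε.le zero_le_four]; ring
  calc ENNReal.ofReal (C ^ finrank ℝ Kᗮ / 4 ^ e) *
        (volume (ball (0 : K) 1) * volume (ball (0 : Kᗮ) 1)) * ENNReal.ofReal (ε ^ e)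
      = ENNReal.ofReal ((ε / 4) ^ finrank ℝ K) * volume (ball (0 : K) 1) *
          (ENNReal.ofReal ((C * (ε / 4) ^ d) ^ finrank ℝ Kᗮ) * volume (ball (0 : Kᗮ) 1)) := by
        rw [← mul_mul_mul_comm, ← ENNReal.ofReal_mul (by positivity), hscale,
          ENNReal.ofReal_mul (by positivity)]
        ring
    _ = volume (ball ((ε / 2) • w) (ε / 4) ×ˢ ball (0 : Kᗮ) (C * (ε / 4) ^ d)) := by
        rw [Measure.volume_eq_prod, Measure.prod_prod,
          Measure.addHaar_ball_of_pos volume ((ε / 2) • w) (by positivity : 0 < ε / 4),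
          Measure.addHaar_ball_of_pos volume (0 : Kᗮ) (by positivity : 0 < C * (ε / 4) ^ d)]
    _ ≤ _ := (measure_mono (K.ball_prod_ball_subset_preimage_add_horn hε hw (by linarith) hC.le
          hsmall)).trans_eq (K.volume_eq_volume_preimage_add _).symm

end Submodule

end

theorem ENNReal.tendsto_div_nhdsGT_zero_of_le_rpow {f g : ℝ → ℝ≥0∞} {A B : ℝ≥0∞} {p q : ℝ}
    (hA : A ≠ ∞) (hB : B ≠ 0) (hqp : q < p)
    (hf : ∀ᶠ ε in 𝓝[>] 0, f ε ≤ A * ENNReal.ofReal (ε ^ p))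
    (hg : ∀ᶠ ε in 𝓝[>] 0, B * ENNReal.ofReal (ε ^ q) ≤ g ε) :
    Tendsto (fun ε => f ε / g ε) (𝓝[>] 0) (𝓝 0) := by
  have hlim : Tendsto (fun ε : ℝ => A / B * ENNReal.ofReal (ε ^ (p - q))) (𝓝[>] 0) (𝓝 0) := by
    have hrpow : Tendsto (fun ε : ℝ => ε ^ (p - q)) (𝓝[>] 0) (𝓝 0) := by
      simpa [Real.zero_rpow (sub_pos.2 hqp).ne'] using
        ((Real.continuous_rpow_const (sub_pos.2 hqp).le).tendsto 0).mono_left nhdsWithin_le_nhds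
    simpa using
      ENNReal.Tendsto.const_mul (ENNReal.tendsto_ofReal hrpow) (Or.inr (ENNReal.div_ne_top hA hB))
  refine tendsto_of_tendsto_of_tendsto_of_le_of_le' tendsto_const_nhds hlim
    (Eventually.of_forall fun _ => zero_le) ?_
  filter_upwards [hf, hg, self_mem_nhdsWithin] with ε hfε hgε (hε : 0 < ε)
  have hq : ENNReal.ofReal (ε ^ q) ≠ 0 := (ENNReal.ofReal_pos.2 (Real.rpow_pos_of_pos hε q)).ne'
  calc f ε / g ε ≤ A * ENNReal.ofReal (ε ^ p) / (B * ENNReal.ofReal (ε ^ q)) :=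
        ENNReal.div_le_div hfε hgε
    _ = A / B * ENNReal.ofReal (ε ^ (p - q)) := by
        rw [ENNReal.mul_div_mul_comm (Or.inr ENNReal.ofReal_ne_top) (Or.inr hq),
          ← ENNReal.ofReal_div_of_pos (Real.rpow_pos_of_pos hε q), Real.rpow_sub hε]

theorem stmt13 (n : ℕ) (α β : Submodule ℝ (E n))
    (hdim : Module.finrank ℝ α < Module.finrank ℝ β)
    (d C₁ C₂ : ℝ) (hd : 1 < d) (h1 : 0 < C₁) (h2 : 0 < C₂) :
    Tendsto (fun ε : ℝ =>
        volume (STg n d C₁ (α : Set (E n)) ∩ ball (0 : E n) ε) /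
        volume (STg n d C₂ (β : Set (E n)) ∩ ball (0 : E n) ε))
      (𝓝[>] (0:ℝ)) (nhds 0) := by
  obtain ⟨A, hA, hα⟩ := α.exists_volume_horn_inter_ball_le (zero_le_one.trans hd.le) h1.le
  obtain ⟨B, hB, hβ⟩ := β.exists_le_volume_horn_inter_ball (hdim.trans_le' (Nat.zero_le _)) hd h2
  have hexp : (finrank ℝ β : ℝ) + d * finrank ℝ βᗮ < (finrank ℝ α : ℝ) + d * finrank ℝ αᗮ := by
    have hsum : (finrank ℝ α : ℝ) + finrank ℝ αᗮ = finrank ℝ β + finrank ℝ βᗮ := by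
      exact_mod_cast α.finrank_add_finrank_orthogonal.trans β.finrank_add_finrank_orthogonal.symm
    have hk : (finrank ℝ α : ℝ) < finrank ℝ β := by exact_mod_cast hdim
    nlinarith [mul_pos (sub_pos.2 hd) (sub_pos.2 hk)]
  exact ENNReal.tendsto_div_nhdsGT_zero_of_le_rpow hA hB hexp
    (eventually_mem_nhdsWithin.mono hα) hβ
end
end

section
/- Let h : ℝ² → ℝ² be defined in polar coordinates by h(r,θ) = (r, θ − log r) for r > 0 and h(0) = 0 (equivalently h(x,y) = (x cos(log(x²+y²)) + y sin(log(x²+y²)), −x sin(log(x²+y²)) + y cos(log(x²+y²)))). Then h is bi-Lipschitz on a neighbourhood of 0, and for every half-line L through the origin, the direction set D(h(L \ {0})) equals the whole circle S¹. -/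
open Filter Metric Topology MeasureTheory

noncomputable section

/-!
In complex coordinates `h z = z · e^{-i log |z|²}`: the circle of radius `r` is rotated by the
angle `-2 log r`. Rotating the circle of radius `r` by `c log r` is `(1 + |c|)`-Lipschitz, since
comparing two points of radii `s ≤ r` costs at most `s · |c| log (r / s) ≤ |c| (r - s)`, and its
inverse is the same map for `-c`; hence `h` is bi-Lipschitz with constants `1/3` and `3`.
On a ray `t v` the angle of `h (t v)` is that of `v` minus `2 log t`, which runs through every
residue mod `2π` as `t → 0`, so every unit vector `a` is a limit direction of `h` along the ray.
-/

open Complex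

lemma Real.mul_abs_log_sub_log_le {r s : ℝ} (hs : 0 ≤ s) (hsr : s ≤ r) :
    s * |Real.log r - Real.log s| ≤ r - s := by
  rcases hs.eq_or_lt with rfl | hs
  · simpa using hsr
  have hr : 0 < r := hs.trans_le hsr
  rw [abs_of_nonneg (sub_nonneg.2 (Real.log_le_log hs hsr)), ← Real.log_div hr.ne' hs.ne']
  calc s * Real.log (r / s) ≤ s * (r / s - 1) := by
        gcongr; exact Real.log_le_sub_one_of_pos (div_pos hr hs)
    _ = r - s := by field_simp

namespace Complex

def spiral (c : ℝ) (z : ℂ) : ℂ :=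
  z * exp ((c * Real.log ‖z‖ : ℝ) * I)

variable (c : ℝ)

@[simp]
lemma norm_spiral (z : ℂ) : ‖spiral c z‖ = ‖z‖ := by
  rw [spiral, norm_mul, norm_exp_ofReal_mul_I, mul_one]

@[simp]
lemma spiral_zero : spiral c 0 = 0 := zero_mul _

lemma spiral_neg_spiral (z : ℂ) : spiral (-c) (spiral c z) = z := by
  rw [spiral, norm_spiral, spiral, mul_assoc, ← exp_add, ← add_mul, ← ofReal_add, neg_mul,
    add_neg_cancel, ofReal_zero, zero_mul, exp_zero, mul_one]

lemma spiral_ofReal_mul {t : ℝ} (ht : 0 < t) {u : ℂ} (hu : ‖u‖ = 1) :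
    spiral c (t * u) = t * u * exp ((c * Real.log t : ℝ) * I) := by
  rw [spiral, norm_mul, hu, mul_one, norm_real, Real.norm_of_nonneg ht.le]

lemma norm_spiral_sub_le_of_norm_le {z w : ℂ} (hwz : ‖w‖ ≤ ‖z‖) :
    ‖spiral c z - spiral c w‖ ≤ (1 + |c|) * ‖z - w‖ := by
  set θ : ℝ := c * (Real.log ‖w‖ - Real.log ‖z‖)
  have hsplit : spiral c z - spiral c w =
      exp ((c * Real.log ‖z‖ : ℝ) * I) * ((z - w) - w * (exp (I * θ) - 1)) := by
    have : exp ((c * Real.log ‖w‖ : ℝ) * I) =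
        exp ((c * Real.log ‖z‖ : ℝ) * I) * exp (I * θ) := by
      rw [← exp_add]; congr 1; push_cast [θ]; ring
    rw [spiral, spiral, this]; ring
  have hθ : ‖w‖ * ‖θ‖ ≤ |c| * ‖z - w‖ := calc
    ‖w‖ * ‖θ‖ = |c| * (‖w‖ * |Real.log ‖z‖ - Real.log ‖w‖|) := by
      rw [Real.norm_eq_abs, abs_mul, abs_sub_comm]; ring
    _ ≤ |c| * (‖z‖ - ‖w‖) := by
      gcongr; exact Real.mul_abs_log_sub_log_le (norm_nonneg w) hwz
    _ ≤ |c| * ‖z - w‖ := by gcongr; exact norm_sub_norm_le z w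
  calc ‖spiral c z - spiral c w‖ ≤ ‖z - w‖ + ‖w‖ * ‖exp (I * θ) - 1‖ := by
        rw [hsplit, norm_mul, norm_exp_ofReal_mul_I, one_mul, ← norm_mul]; exact norm_sub_le _ _
    _ ≤ ‖z - w‖ + ‖w‖ * ‖θ‖ := by gcongr; exact Real.norm_exp_I_mul_ofReal_sub_one_le
    _ ≤ (1 + |c|) * ‖z - w‖ := by linarith

lemma norm_spiral_sub_le (z w : ℂ) : ‖spiral c z - spiral c w‖ ≤ (1 + |c|) * ‖z - w‖ := by
  rcases le_total ‖w‖ ‖z‖ with h | h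
  · exact norm_spiral_sub_le_of_norm_le c h
  · rw [norm_sub_rev, norm_sub_rev z]; exact norm_spiral_sub_le_of_norm_le c h

lemma norm_sub_le_norm_spiral_sub (z w : ℂ) :
    ‖z - w‖ ≤ (1 + |c|) * ‖spiral c z - spiral c w‖ := by
  simpa only [spiral_neg_spiral, abs_neg] using norm_spiral_sub_le (-c) (spiral c z) (spiral c w)

lemma exists_seq_spiral_ofReal_mul_eq (hc : c < 0) {u a : ℂ} (hu : ‖u‖ = 1) (ha : ‖a‖ = 1) :
    ∃ t : ℕ → ℝ, (∀ m, 0 < t m) ∧ Tendsto t atTop (𝓝 0) ∧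
      ∀ m, spiral c (t m * u) = t m * a := by
  have hu0 : u ≠ 0 := norm_ne_zero_iff.1 (by rw [hu]; exact one_ne_zero)
  set φ := arg (a / u)
  have hφ : exp (φ * I) = a / u := by
    simpa [norm_div, ha, hu] using norm_mul_exp_arg_mul_I (a / u)
  -- chosen so that `c log (t m) = arg (a / u) + 2πm`
  refine ⟨fun m => Real.exp ((φ + m * (2 * Real.pi)) / c), fun m => Real.exp_pos _, ?_,
    fun m => ?_⟩
  · refine Real.tendsto_exp_atBot.comp (Tendsto.atTop_div_const_of_neg hc ?_)
    exact tendsto_atTop_add_const_left _ _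
      (tendsto_natCast_atTop_atTop.atTop_mul_const (by positivity))
  · have hper : exp ((φ + m * (2 * Real.pi) : ℝ) * I) = exp (φ * I) := by
      simpa using exp_mul_I_periodic.nat_mul m φ
    rw [spiral_ofReal_mul c (Real.exp_pos _) hu, Real.log_exp, mul_div_cancel₀ _ hc.ne, hper, hφ,
      mul_assoc, mul_div_cancel₀ _ hu0]

end Complex

lemma repr_spiral_neg_two_symm_apply (x : E 2) :
    (orthonormalBasisOneI.repr (spiral (-2) (orthonormalBasisOneI.repr.symm x))) 0 =
        x 0 * Real.cos (Real.log ((x 0) ^ 2 + (x 1) ^ 2)) +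
          x 1 * Real.sin (Real.log ((x 0) ^ 2 + (x 1) ^ 2)) ∧
    (orthonormalBasisOneI.repr (spiral (-2) (orthonormalBasisOneI.repr.symm x))) 1 =
        - x 0 * Real.sin (Real.log ((x 0) ^ 2 + (x 1) ^ 2)) +
          x 1 * Real.cos (Real.log ((x 0) ^ 2 + (x 1) ^ 2)) := by
  set z := orthonormalBasisOneI.repr.symm x
  have hz : z.re = x 0 ∧ z.im = x 1 := by simp [z]
  have hlog : ((-2 * Real.log ‖z‖ : ℝ) : ℂ) = ((-Real.log ((x 0) ^ 2 + (x 1) ^ 2) : ℝ) : ℂ) := by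
    rw [norm_eq_sqrt_sq_add_sq, Real.log_sqrt (by positivity), hz.1, hz.2]; congr 1; ring
  simp only [spiral, hlog, orthonormalBasisOneI_repr_apply, mul_re, mul_im, exp_ofReal_mul_I_re,
    exp_ofReal_mul_I_im, Real.cos_neg, Real.sin_neg, hz.1, hz.2, Matrix.cons_val_zero,
    Matrix.cons_val_one, Matrix.cons_val_fin_one]
  constructor <;> ring

lemma dir_subset_sphere (n : ℕ) (A : Set (E n)) : Dir n A ⊆ sphere 0 1 :=
  fun _ ha => mem_sphere_zero_iff_norm.2 ha.1

lemma mem_dir_of_smul_mem {n : ℕ} {A : Set (E n)} {a : E n} (ha : ‖a‖ = 1) {t : ℕ → ℝ}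
    (ht0 : ∀ m, 0 < t m) (ht : Tendsto t atTop (𝓝 0)) (hA : ∀ m, t m • a ∈ A) :
    a ∈ Dir n A := by
  have ha0 : a ≠ 0 := norm_ne_zero_iff.1 (by rw [ha]; exact one_ne_zero)
  refine ⟨ha, fun m => t m • a, fun m => ⟨hA m, smul_ne_zero (ht0 m).ne' ha0⟩, ?_, ?_⟩
  · simpa using ht.smul_const a
  · refine tendsto_const_nhds.congr fun m => ?_
    rw [norm_smul, ha, mul_one, Real.norm_of_nonneg (ht0 m).le, smul_smul,
      inv_mul_cancel₀ (ht0 m).ne', one_smul]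

theorem stmt17 (h : E 2 → E 2) (hh0 : h 0 = 0)
    (hdef : ∀ x : E 2, x ≠ 0 →
      (h x) 0 = x 0 * Real.cos (Real.log ((x 0) ^ 2 + (x 1) ^ 2)) +
                x 1 * Real.sin (Real.log ((x 0) ^ 2 + (x 1) ^ 2)) ∧
      (h x) 1 = - x 0 * Real.sin (Real.log ((x 0) ^ 2 + (x 1) ^ 2)) +
                x 1 * Real.cos (Real.log ((x 0) ^ 2 + (x 1) ^ 2))) :
    (∃ ε > (0:ℝ), ∃ K₁ K₂ : ℝ, 0 < K₁ ∧ K₁ ≤ K₂ ∧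
      ∀ x ∈ ball (0 : E 2) ε, ∀ y ∈ ball (0 : E 2) ε,
        K₁ * ‖x - y‖ ≤ ‖h x - h y‖ ∧ ‖h x - h y‖ ≤ K₂ * ‖x - y‖) ∧
    ∀ v : E 2, ‖v‖ = 1 →
      Dir 2 (h '' ({x : E 2 | ∃ t : ℝ, 0 ≤ t ∧ x = t • v} \ {0})) =
        Metric.sphere (0 : E 2) 1 := by
  set e := orthonormalBasisOneI.repr
  have heq : ∀ x, h x = e (spiral (-2) (e.symm x)) := by
    intro x
    rcases eq_or_ne x 0 with rfl | hx
    · simp [hh0]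
    ext i
    fin_cases i
    exacts [(hdef x hx).1.trans (repr_spiral_neg_two_symm_apply x).1.symm,
      (hdef x hx).2.trans (repr_spiral_neg_two_symm_apply x).2.symm]
  refine ⟨⟨1, one_pos, 1 / 3, 3, by norm_num, by norm_num, fun x _ y _ => ?_⟩, fun v hv => ?_⟩
  · have hlower := norm_sub_le_norm_spiral_sub (-2) (e.symm x) (e.symm y)
    have hupper := norm_spiral_sub_le (-2) (e.symm x) (e.symm y)
    rw [← map_sub, e.symm.norm_map] at hlower hupper
    norm_num at hlower hupper
    rw [heq, heq, ← map_sub, e.norm_map]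
    constructor <;> linarith
  refine subset_antisymm (dir_subset_sphere 2 _) fun a ha => ?_
  rw [mem_sphere_zero_iff_norm] at ha
  obtain ⟨t, ht0, ht, hta⟩ := exists_seq_spiral_ofReal_mul_eq (-2) (by norm_num)
    (u := e.symm v) (a := e.symm a) (by simpa using hv) (by simpa using ha)
  have hv0 : v ≠ 0 := norm_ne_zero_iff.1 (by rw [hv]; exact one_ne_zero)
  refine mem_dir_of_smul_mem ha ht0 ht fun m =>
    ⟨t m • v, ⟨⟨t m, (ht0 m).le, rfl⟩, smul_ne_zero (ht0 m).ne' hv0⟩, ?_⟩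
  rw [heq, map_smul, real_smul, hta, ← real_smul, map_smul, e.apply_symm_apply]
end
end
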